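/- arXiv:math/0010224 — 6 statements merged into one kernel-verified Lean document; each statement's English description precedes it below -/
import Mathlib

section
/- Let f : [-1,1] → X be a c-similar embedding (c > 0) into a metric space X and g : X → Y a K-Lipschitz embedding with K-Lipschitz inverse (K ≥ 1). If t ∈ (-1,1) satisfies μ(g(f([-1,t]))) = μ(g(f([t,1]))), then |t| ≤ (K²−1)/(K²+1) < 1. -/
/-- The Morse `μ_k`-length of the arc parametrized by `f` on `[a,b]`:
the supremum, over monotone chains `c 0 ≤ c 1 ≤ ⋯ ≤ c k` in `[a,b]`, of
`min_i d(f (c (i-1)), f (c i))`. -/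
noncomputable def morseMuK {X : Type*} [MetricSpace X] (f : ℝ → X) (a b : ℝ) (k : ℕ) : ℝ :=
  sSup {m : ℝ | ∃ c : Fin (k + 1) → ℝ, Monotone c ∧ (∀ i, c i ∈ Set.Icc a b) ∧
    m = ⨅ i : Fin k, dist (f (c i.castSucc)) (f (c i.succ))}

/-- The Morse `μ`-length `μ = ∑_{k ≥ 1} 2^{-k} μ_k` of the arc parametrized by `f` on `[a,b]`. -/
noncomputable def morseMu {X : Type*} [MetricSpace X] (f : ℝ → X) (a b : ℝ) : ℝ :=
  ∑' k : ℕ, (1 / 2 ^ (k + 1) : ℝ) * morseMuK f a b (k + 1)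


/-!
Along an arc whose parametrization `F` satisfies `C₁ |x - y| ≤ d(F x, F y) ≤ C₂ |x - y|`,
the `μ_k`-length of the piece over `[a, b]` lies between `C₁ (b - a) / k` and `C₂ (b - a) / k`:
equally spaced chains give the lower bound, and every chain of `k` steps in `[a, b]` has a step
of length at most `(b - a) / k`, which gives the upper bound. Since `∑ 2⁻ᵏ / k = log 2`, the
`μ`-length lies between `C₁ (b - a) log 2` and `C₂ (b - a) log 2`. For `g ∘ f` one may take
`C₁ = c / K` and `C₂ = K c`, so balancing `[-1, t]` against `[t, 1]` forces
`1 + t ≤ K² (1 - t)` and `1 - t ≤ K² (1 + t)`.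
-/

open Set Real

lemma exists_succ_sub_castSucc_le {k : ℕ} {a b : ℝ} {ch : Fin (k + 2) → ℝ}
    (hch : ∀ i, ch i ∈ Icc a b) :
    ∃ i : Fin (k + 1), ch i.succ - ch i.castSucc ≤ (b - a) / (k + 1) := by
  have htelescope : ∑ i : Fin (k + 1), (ch i.succ - ch i.castSucc) =
      ch (Fin.last k).succ - ch 0 := by
    rw [← Fin.sum_Iic_sub (Fin.last k) ch, ← Fin.top_eq_last, Finset.Iic_top]
  have hsum : ∑ i : Fin (k + 1), (ch i.succ - ch i.castSucc) ≤
      ∑ _i : Fin (k + 1), (b - a) / (k + 1) := by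
    rw [htelescope, Finset.sum_const, Finset.card_univ, Fintype.card_fin, nsmul_eq_mul]
    push_cast
    rw [mul_div_cancel₀ _ (by positivity)]
    linarith [(hch (Fin.last k).succ).2, (hch 0).1]
  obtain ⟨i, -, hi⟩ := Finset.exists_le_of_sum_le Finset.univ_nonempty hsum
  exact ⟨i, hi⟩

lemma hasSum_one_div_two_pow_mul_one_div :
    HasSum (fun k : ℕ => 1 / 2 ^ (k + 1) * (1 / ((k : ℝ) + 1))) (log 2) := by
  convert hasSum_pow_div_log_of_abs_lt_one (x := (1 / 2 : ℝ)) (by norm_num [abs_of_pos]) using 1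
  · ext k
    rw [one_div_pow]
    ring
  · rw [show (1 : ℝ) - 1 / 2 = 2⁻¹ by norm_num, log_inv, neg_neg]

section MorseLength

variable {X : Type*} [MetricSpace X] {F : ℝ → X} {a b : ℝ}

lemma morseMuK_nonneg (k : ℕ) : 0 ≤ morseMuK F a b k :=
  Real.sSup_nonneg <| by
    rintro _ ⟨ch, -, -, rfl⟩
    exact Real.iInf_nonneg fun _ => dist_nonneg

section UpperBound

variable {C : ℝ} (hC : 0 ≤ C)
  (hF : ∀ x ∈ Icc a b, ∀ y ∈ Icc a b, dist (F x) (F y) ≤ C * |x - y|)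
include hC hF

lemma iInf_dist_le_of_dist_le_mul {k : ℕ} {ch : Fin (k + 2) → ℝ} (hmono : Monotone ch)
    (hch : ∀ i, ch i ∈ Icc a b) :
    ⨅ i : Fin (k + 1), dist (F (ch i.castSucc)) (F (ch i.succ)) ≤ C * (b - a) / (k + 1) := by
  obtain ⟨i, hi⟩ := exists_succ_sub_castSucc_le hch
  have hstep : |ch i.castSucc - ch i.succ| = ch i.succ - ch i.castSucc := by
    rw [abs_sub_comm, abs_of_nonneg (sub_nonneg.2 (hmono (Fin.castSucc_le_succ i)))]
  calc ⨅ i : Fin (k + 1), dist (F (ch i.castSucc)) (F (ch i.succ))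
      ≤ dist (F (ch i.castSucc)) (F (ch i.succ)) := ciInf_le (finite_range _).bddBelow i
    _ ≤ C * (ch i.succ - ch i.castSucc) := hstep ▸ hF _ (hch _) _ (hch _)
    _ ≤ C * ((b - a) / (k + 1)) := by gcongr
    _ = C * (b - a) / (k + 1) := by ring

lemma morseMuK_le (hab : a ≤ b) (k : ℕ) : morseMuK F a b (k + 1) ≤ C * (b - a) / (k + 1) :=
  csSup_le ⟨_, fun _ => a, monotone_const, fun _ => ⟨le_rfl, hab⟩, rfl⟩ <| by
    rintro _ ⟨ch, hmono, hch, rfl⟩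
    exact iInf_dist_le_of_dist_le_mul hC hF hmono hch

lemma one_div_two_pow_mul_morseMuK_le (hab : a ≤ b) (k : ℕ) :
    1 / 2 ^ (k + 1) * morseMuK F a b (k + 1) ≤
      C * (b - a) * (1 / 2 ^ (k + 1) * (1 / ((k : ℝ) + 1))) :=
  calc 1 / 2 ^ (k + 1) * morseMuK F a b (k + 1)
      ≤ 1 / 2 ^ (k + 1) * (C * (b - a) / (k + 1)) := by gcongr; exact morseMuK_le hC hF hab k
    _ = C * (b - a) * (1 / 2 ^ (k + 1) * (1 / (k + 1))) := by ring

lemma summable_morseMuK (hab : a ≤ b) :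
    Summable fun k : ℕ => 1 / 2 ^ (k + 1) * morseMuK F a b (k + 1) :=
  (hasSum_one_div_two_pow_mul_one_div.mul_left (C * (b - a))).summable.of_nonneg_of_le
    (fun _ => mul_nonneg (by positivity) (morseMuK_nonneg _))
    (one_div_two_pow_mul_morseMuK_le hC hF hab)

lemma morseMu_le (hab : a ≤ b) : morseMu F a b ≤ C * (b - a) * log 2 :=
  hasSum_le (one_div_two_pow_mul_morseMuK_le hC hF hab) (summable_morseMuK hC hF hab).hasSum
    (hasSum_one_div_two_pow_mul_one_div.mul_left _)

end UpperBound

lemma le_morseMuK {C₁ C₂ : ℝ} (hC₂ : 0 ≤ C₂)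
    (hlow : ∀ x ∈ Icc a b, ∀ y ∈ Icc a b, C₁ * |x - y| ≤ dist (F x) (F y))
    (hup : ∀ x ∈ Icc a b, ∀ y ∈ Icc a b, dist (F x) (F y) ≤ C₂ * |x - y|)
    (hab : a ≤ b) (k : ℕ) : C₁ * (b - a) / (k + 1) ≤ morseMuK F a b (k + 1) := by
  set δ := (b - a) / (k + 1)
  have hδ : 0 ≤ δ := div_nonneg (sub_nonneg.2 hab) (by positivity)
  set ch : Fin (k + 2) → ℝ := fun j => a + j * δ
  have hmono : Monotone ch := fun i j hij => by
    simp only [ch]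
    gcongr
    exact_mod_cast hij
  have hch : ∀ j, ch j ∈ Icc a b := fun j => by
    have hj : (j : ℝ) ≤ k + 1 := by exact_mod_cast Nat.lt_succ_iff.1 j.isLt
    have hlast : (k + 1 : ℝ) * δ = b - a := mul_div_cancel₀ _ (by positivity)
    constructor <;> simp only [ch] <;> nlinarith
  have hstep : ∀ i : Fin (k + 1), |ch i.castSucc - ch i.succ| = δ := fun i => by
    simp only [ch, Fin.val_succ, Fin.val_castSucc]
    push_cast
    rw [show a + i * δ - (a + (i + 1) * δ) = -δ by ring, abs_neg, abs_of_nonneg hδ]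
  have hbdd : BddAbove {m : ℝ | ∃ c : Fin (k + 2) → ℝ, Monotone c ∧ (∀ i, c i ∈ Icc a b) ∧
      m = ⨅ i : Fin (k + 1), dist (F (c i.castSucc)) (F (c i.succ))} := by
    refine ⟨C₂ * (b - a) / (k + 1), ?_⟩
    rintro _ ⟨ch, hmono, hch, rfl⟩
    exact iInf_dist_le_of_dist_le_mul hC₂ hup hmono hch
  calc C₁ * (b - a) / (k + 1) = C₁ * δ := by ring
    _ ≤ ⨅ i : Fin (k + 1), dist (F (ch i.castSucc)) (F (ch i.succ)) :=
        le_ciInf fun i => hstep i ▸ hlow _ (hch _) _ (hch _)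
    _ ≤ morseMuK F a b (k + 1) := le_csSup hbdd ⟨ch, hmono, hch, rfl⟩

lemma le_morseMu {C₁ C₂ : ℝ} (hC₂ : 0 ≤ C₂)
    (hlow : ∀ x ∈ Icc a b, ∀ y ∈ Icc a b, C₁ * |x - y| ≤ dist (F x) (F y))
    (hup : ∀ x ∈ Icc a b, ∀ y ∈ Icc a b, dist (F x) (F y) ≤ C₂ * |x - y|)
    (hab : a ≤ b) : C₁ * (b - a) * log 2 ≤ morseMu F a b :=
  hasSum_le (fun (k : ℕ) => calc
      C₁ * (b - a) * (1 / 2 ^ (k + 1) * (1 / ((k : ℝ) + 1)))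
        = 1 / 2 ^ (k + 1) * (C₁ * (b - a) / (k + 1)) := by ring
      _ ≤ 1 / 2 ^ (k + 1) * morseMuK F a b (k + 1) := by
        gcongr
        exact le_morseMuK hC₂ hlow hup hab k)
    (hasSum_one_div_two_pow_mul_one_div.mul_left _) (summable_morseMuK hC₂ hup hab).hasSum

lemma abs_le_of_morseMu_eq {C₁ C₂ t : ℝ} (hC₁ : 0 < C₁) (hC₂ : 0 ≤ C₂)
    (hlow : ∀ x ∈ Icc (-1 : ℝ) 1, ∀ y ∈ Icc (-1 : ℝ) 1, C₁ * |x - y| ≤ dist (F x) (F y))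
    (hup : ∀ x ∈ Icc (-1 : ℝ) 1, ∀ y ∈ Icc (-1 : ℝ) 1, dist (F x) (F y) ≤ C₂ * |x - y|)
    (ht : t ∈ Icc (-1 : ℝ) 1) (heq : morseMu F (-1) t = morseMu F t 1) :
    |t| ≤ (C₂ - C₁) / (C₂ + C₁) := by
  have hleft : Icc (-1) t ⊆ Icc (-1 : ℝ) 1 := Icc_subset_Icc le_rfl ht.2
  have hright : Icc t 1 ⊆ Icc (-1 : ℝ) 1 := Icc_subset_Icc ht.1 le_rfl
  have hmuL₁ := le_morseMu hC₂ (fun x hx y hy => hlow x (hleft hx) y (hleft hy))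
    (fun x hx y hy => hup x (hleft hx) y (hleft hy)) ht.1
  have hmuL₂ := morseMu_le hC₂ (fun x hx y hy => hup x (hleft hx) y (hleft hy)) ht.1
  have hmuR₁ := le_morseMu hC₂ (fun x hx y hy => hlow x (hright hx) y (hright hy))
    (fun x hx y hy => hup x (hright hx) y (hright hy)) ht.2
  have hmuR₂ := morseMu_le hC₂ (fun x hx y hy => hup x (hright hx) y (hright hy)) ht.2
  have hlog := log_pos one_lt_two
  have hleft_le : C₁ * (t + 1) ≤ C₂ * (1 - t) := le_of_mul_le_mul_right (by linarith) hlog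
  have hright_le : C₁ * (1 - t) ≤ C₂ * (t + 1) := le_of_mul_le_mul_right (by linarith) hlog
  have hsum : 0 < C₂ + C₁ := by linarith
  rw [abs_le, neg_le, le_div_iff₀ hsum, le_div_iff₀ hsum]
  constructor <;> linarith

end MorseLength

theorem balance_point_bound_general {X Y : Type*} [MetricSpace X] [MetricSpace Y]
    (f : ℝ → X) (c : ℝ) (hc : 0 < c)
    (hf : ∀ x ∈ Set.Icc (-1 : ℝ) 1, ∀ y ∈ Set.Icc (-1 : ℝ) 1,
      dist (f x) (f y) = c * |x - y|)
    (g : X → Y) (K : ℝ) (hK : 1 ≤ K)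
    (hg : ∀ x y : X, dist x y / K ≤ dist (g x) (g y) ∧ dist (g x) (g y) ≤ K * dist x y)
    (t : ℝ) (ht : t ∈ Set.Ioo (-1 : ℝ) 1)
    (heq : morseMu (g ∘ f) (-1) t = morseMu (g ∘ f) t 1) :
    |t| ≤ (K ^ 2 - 1) / (K ^ 2 + 1) ∧ (K ^ 2 - 1) / (K ^ 2 + 1) < 1 := by
  have hK₀ : 0 < K := by linarith
  have hlow : ∀ x ∈ Icc (-1 : ℝ) 1, ∀ y ∈ Icc (-1 : ℝ) 1,
      c / K * |x - y| ≤ dist ((g ∘ f) x) ((g ∘ f) y) := fun x hx y hy => by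
    simpa [hf x hx y hy, div_mul_eq_mul_div] using (hg (f x) (f y)).1
  have hup : ∀ x ∈ Icc (-1 : ℝ) 1, ∀ y ∈ Icc (-1 : ℝ) 1,
      dist ((g ∘ f) x) ((g ∘ f) y) ≤ K * c * |x - y| := fun x hx y hy => by
    simpa [hf x hx y hy, mul_assoc] using (hg (f x) (f y)).2
  have hbound := abs_le_of_morseMu_eq (div_pos hc hK₀) (by positivity) hlow hup
    (Ioo_subset_Icc_self ht) heq
  have hratio : (K * c - c / K) / (K * c + c / K) = (K ^ 2 - 1) / (K ^ 2 + 1) := by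
    field_simp
  exact ⟨hratio ▸ hbound, (div_lt_one (by positivity)).2 (by linarith)⟩

/-- If `f : [-1,1] → X` is a `c`-similar embedding (`c > 0`) and `g : X → Y` is a
`K`-Lipschitz embedding with `K`-Lipschitz inverse (`K ≥ 1`), then the unique balance
point `t` with `μ(g(f([-1,t]))) = μ(g(f([t,1])))` satisfies
`|t| ≤ (K²−1)/(K²+1) < 1`. -/
theorem balance_point_bound {X Y : Type*} [MetricSpace X] [MetricSpace Y]
    (f : ℝ → X) (c : ℝ) (hc : 0 < c)
    (hf : ∀ x ∈ Set.Icc (-1 : ℝ) 1, ∀ y ∈ Set.Icc (-1 : ℝ) 1,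
      dist (f x) (f y) = c * |x - y|)
    (g : X → Y) (K : ℝ) (hK : 1 ≤ K)
    (hg : ∀ x y : X, dist x y / K ≤ dist (g x) (g y) ∧ dist (g x) (g y) ≤ K * dist x y)
    (hgi : Function.Injective g)
    (t : ℝ) (ht : t ∈ Set.Ioo (-1 : ℝ) 1)
    (heq : morseMu (g ∘ f) (-1) t = morseMu (g ∘ f) t 1) :
    |t| ≤ (K ^ 2 - 1) / (K ^ 2 + 1) ∧ (K ^ 2 - 1) / (K ^ 2 + 1) < 1 :=
  balance_point_bound_general f c hc hf g K hK hg t ht heq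
end

section
/- Let (X,d) be a proper metric space (closed bounded sets are compact), x₀ ∈ X, K ≥ 1, r ≥ 0, and let H^K_r be the set of bijections f : X → X such that (1/K)d(x,y) ≤ d(f(x),f(y)) ≤ K d(x,y) for all x,y and d(f(x₀),x₀) ≤ r and d(f⁻¹(x₀),x₀) ≤ r. Then H^K_r is compact in the topology of uniform convergence on compact sets (for both f and f⁻¹). -/
/-!
The inverse of a bijection satisfying the lower bound `d(x, y) / K ≤ d(f x, f y)` is
`K`-Lipschitz, so the set lies in `T × T`, where `T` is the set of `K`-Lipschitz maps moving `x₀`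
by at most `r`. By Arzelà–Ascoli `T` is compact: it is equicontinuous, and `f x` stays in the
compact ball of radius `r + K d(x, x₀)` about `x₀`. All defining conditions are closed
conditions on finitely many values of `f` and `f⁻¹`, so the set is a closed subset of `T × T`.
-/

open Function Metric NNReal Set

section

variable {X Y : Type*}

theorem isCompact_setOfPred_lipschitzWith_dist_le [PseudoMetricSpace X] [MetricSpace Y]
    [ProperSpace Y] (K : ℝ≥0) (x₀ : X) (y₀ : Y) (r : ℝ) :
    IsCompact {g : X → Y | LipschitzWith K g ∧ dist (g x₀) y₀ ≤ r} := by
  refine (isCompact_univ_pi fun x ↦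
    isCompact_closedBall y₀ (r + K * dist x x₀)).of_isClosed_subset
    ((isClosed_setOfPred_lipschitzWith K).inter
      (isClosed_le ((continuous_apply x₀).dist continuous_const) continuous_const))
    fun g ⟨hg, hg₀⟩ x _ ↦ ?_
  calc dist (g x) y₀ ≤ dist (g x) (g x₀) + dist (g x₀) y₀ := dist_triangle _ _ _
    _ ≤ r + K * dist x x₀ := by linarith [hg.dist_le_mul x x₀]

theorem ContinuousMap.isCompact_setOfPred_lipschitzWith_dist_le [PseudoMetricSpace X]
    [MetricSpace Y] [ProperSpace Y] (K : ℝ≥0) (x₀ : X) (y₀ : Y) (r : ℝ) :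
    IsCompact {f : C(X, Y) | LipschitzWith K f ∧ dist (f x₀) y₀ ≤ r} := by
  refine ArzelaAscoli.isCompact_of_equicontinuous _ ?_
    (LipschitzWith.uniformEquicontinuous _ K fun f ↦ f.2.1).equicontinuous
  convert _root_.isCompact_setOfPred_lipschitzWith_dist_le K x₀ y₀ r using 1
  ext g
  exact ⟨by rintro ⟨f, hf, rfl⟩; exact hf, fun hg ↦ ⟨⟨g, hg.1.continuous⟩, hg, rfl⟩⟩

theorem ContinuousMap.isClosed_setOfPred_leftInverse [TopologicalSpace X] [TopologicalSpace Y]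
    [T2Space X] [LocallyCompactSpace Y] :
    IsClosed {p : C(X, Y) × C(Y, X) | LeftInverse p.2 p.1} := by
  simp only [LeftInverse, ofPred_forall]
  exact isClosed_iInter fun x ↦ isClosed_eq
    (continuous_eval.comp (continuous_snd.prodMk ((continuous_eval_const x).comp continuous_fst)))
    continuous_const

end

theorem biLipschitz_ball_compact_general {X : Type*} [MetricSpace X] [ProperSpace X]
    (x₀ : X) (K r : ℝ) (hK : 1 ≤ K) :
    IsCompact {p : C(X, X) × C(X, X) |
      Function.LeftInverse p.2 p.1 ∧ Function.RightInverse p.2 p.1 ∧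
      (∀ x y : X, dist x y / K ≤ dist (p.1 x) (p.1 y) ∧
        dist (p.1 x) (p.1 y) ≤ K * dist x y) ∧
      dist (p.1 x₀) x₀ ≤ r ∧ dist (p.2 x₀) x₀ ≤ r} := by
  have hK₀ : 0 < K := zero_lt_one.trans_le hK
  set T := {f : C(X, X) | LipschitzWith K.toNNReal f ∧ dist (f x₀) x₀ ≤ r}
  have hT : IsCompact T := ContinuousMap.isCompact_setOfPred_lipschitzWith_dist_le _ x₀ x₀ r
  refine (hT.prod hT).of_isClosed_subset ?closed ?subset
  case closed =>
    simp only [ofPred_and, ofPred_forall]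
    refine ContinuousMap.isClosed_setOfPred_leftInverse.inter <|
      (ContinuousMap.isClosed_setOfPred_leftInverse.preimage continuous_swap).inter <|
      (isClosed_iInter fun x ↦ isClosed_iInter fun y ↦
        (isClosed_le ?_ ?_).inter (isClosed_le ?_ ?_)).inter <|
      (isClosed_le ?_ ?_).inter (isClosed_le ?_ ?_) <;> fun_prop
  case subset =>
    rintro ⟨f, g⟩ ⟨-, hfg, hf, hf₀, hg₀⟩
    have hf_lip : LipschitzWith K.toNNReal f :=
      .of_dist_le_mul fun x y ↦ by simpa [hK₀.le] using (hf x y).2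
    have hf_anti : AntilipschitzWith K.toNNReal f :=
      .of_le_mul_dist fun x y ↦ by simpa [hK₀.le, div_le_iff₀' hK₀] using (hf x y).1
    exact ⟨⟨hf_lip, hf₀⟩, hf_anti.to_rightInverse hfg, hg₀⟩

/-- Let `(X,d)` be a proper metric space, `x₀ ∈ X`, `K ≥ 1`, `r ≥ 0`.  The set `H^K_r`
of (pairs of reciprocal continuous maps representing) bijections `f` with
`(1/K)d(x,y) ≤ d(f x, f y) ≤ K d(x,y)`, `d(f x₀, x₀) ≤ r` and `d(f⁻¹ x₀, x₀) ≤ r`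
is compact in the topology of uniform convergence on compact sets (for both `f` and
`f⁻¹`), i.e. in `C(X,X) × C(X,X)` with the compact-open topology. -/
theorem biLipschitz_ball_compact {X : Type*} [MetricSpace X] [ProperSpace X]
    (x₀ : X) (K r : ℝ) (hK : 1 ≤ K) (hr : 0 ≤ r) :
    IsCompact {p : C(X, X) × C(X, X) |
      Function.LeftInverse p.2 p.1 ∧ Function.RightInverse p.2 p.1 ∧
      (∀ x y : X, dist x y / K ≤ dist (p.1 x) (p.1 y) ∧
        dist (p.1 x) (p.1 y) ≤ K * dist x y) ∧
      dist (p.1 x₀) x₀ ≤ r ∧ dist (p.2 x₀) x₀ ≤ r} :=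
  biLipschitz_ball_compact_general x₀ K r hK
end

section
/- If X is a proper metric space with a distinguished point, then the group of Lipschitz homeomorphisms of X (homeomorphisms f with f and f⁻¹ Lipschitz) is σ-compact in the compact-open topology. -/
/-!
By Arzelà–Ascoli, the continuous maps that are `n`-Lipschitz and move the basepoint by at most
`n` form a compact set in the compact-open topology: they are equicontinuous, and pointwise they
take values in closed balls, which are compact because `X` is proper. Being mutually inverse is
a closed condition on pairs `(f, g)`, since evaluation is continuous on `C(X, X)` for locally
compact `X`. So the group is the countable union over `n` of the compact sets of mutually inverse
pairs with both components in the `n`-th set.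
-/

open Filter Function Metric Set
open scoped NNReal

section Lipschitz

variable {X Y : Type*} [PseudoMetricSpace X] [PseudoMetricSpace Y]

theorem isCompact_setOf_lipschitzWith_dist_le [ProperSpace Y] (K : ℝ≥0) (x₀ : X) (y₀ : Y)
    (r : ℝ) : IsCompact {g : X → Y | LipschitzWith K g ∧ dist (g x₀) y₀ ≤ r} := by
  have hclosed : IsClosed {g : X → Y | LipschitzWith K g ∧ dist (g x₀) y₀ ≤ r} :=
    (isClosed_setOfPred_lipschitzWith K).inter
      (isClosed_le ((continuous_apply x₀).dist continuous_const) continuous_const)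
  refine (isCompact_univ_pi fun x => isCompact_closedBall y₀ (K * dist x x₀ + r))
    |>.of_isClosed_subset hclosed ?_
  rintro g ⟨hg, hg₀⟩ x -
  calc dist (g x) y₀ ≤ dist (g x) (g x₀) + dist (g x₀) y₀ := dist_triangle _ _ _
    _ ≤ K * dist x x₀ + r := add_le_add (hg.dist_le_mul x x₀) hg₀

theorem ContinuousMap.isCompact_setOf_lipschitzWith_dist_le [ProperSpace Y] (K : ℝ≥0) (x₀ : X)
    (y₀ : Y) (r : ℝ) : IsCompact {f : C(X, Y) | LipschitzWith K f ∧ dist (f x₀) y₀ ≤ r} := by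
  refine ArzelaAscoli.isCompact_of_equicontinuous _ ?_
    (LipschitzWith.uniformEquicontinuous _ K fun f => f.2.1).equicontinuous
  convert _root_.isCompact_setOf_lipschitzWith_dist_le K x₀ y₀ r
  ext g
  exact ⟨by rintro ⟨f, hf, rfl⟩; exact hf, fun hg => ⟨⟨g, hg.1.continuous⟩, hg, rfl⟩⟩

theorem LipschitzWith.eventually_lipschitzWith_dist_le {K : ℝ≥0} {f : X → Y}
    (hf : LipschitzWith K f) (x₀ : X) (y₀ : Y) :
    ∀ᶠ n : ℕ in atTop, LipschitzWith n f ∧ dist (f x₀) y₀ ≤ n := by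
  filter_upwards [tendsto_natCast_atTop_atTop.eventually_ge_atTop K,
    tendsto_natCast_atTop_atTop.eventually_ge_atTop (dist (f x₀) y₀)] with n hK hd
  exact ⟨hf.weaken hK, hd⟩

end Lipschitz

theorem ContinuousMap.isClosed_setOf_leftInverse {X Y : Type*} [TopologicalSpace X] [TopologicalSpace Y]
    [T2Space X] [LocallyCompactPair Y X] :
    IsClosed {p : C(X, Y) × C(Y, X) | LeftInverse p.2 p.1} := by
  simp only [LeftInverse, ofPred_forall]
  exact isClosed_iInter fun x =>
    isClosed_eq (continuous_eval.comp (continuous_snd.prodMk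
      ((continuous_eval_const x).comp continuous_fst))) continuous_const

/-- If `X` is a proper metric space with a distinguished point, the group of Lipschitz
homeomorphisms of `X` (homeomorphisms `f` with `f` and `f⁻¹` Lipschitz), viewed via
`f ↦ (f, f⁻¹)` inside `C(X,X) × C(X,X)` with the compact-open topology, is
σ-compact. -/
theorem lipschitzHomeoGroup_sigmaCompact {X : Type*} [MetricSpace X] [ProperSpace X]
    (x₀ : X) :
    IsSigmaCompact {p : C(X, X) × C(X, X) |
      Function.LeftInverse p.2 p.1 ∧ Function.RightInverse p.2 p.1 ∧
      ∃ K : NNReal, LipschitzWith K p.1 ∧ LipschitzWith K p.2} := by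
  set S : ℕ → Set C(X, X) := fun n => {f | LipschitzWith n f ∧ dist (f x₀) x₀ ≤ n}
  set I := {p : C(X, X) × C(X, X) | LeftInverse p.2 p.1 ∧ RightInverse p.2 p.1}
  have hI : IsClosed I := ContinuousMap.isClosed_setOf_leftInverse.inter
    (ContinuousMap.isClosed_setOf_leftInverse.preimage continuous_swap)
  refine ⟨fun n => S n ×ˢ S n ∩ I, fun n =>
    ((ContinuousMap.isCompact_setOf_lipschitzWith_dist_le _ x₀ x₀ n).prod
      (ContinuousMap.isCompact_setOf_lipschitzWith_dist_le _ x₀ x₀ n)).inter_right hI, ?_⟩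
  ext p
  simp only [S, I, mem_iUnion, mem_inter_iff, mem_prod, mem_ofPred_eq]
  constructor
  · rintro ⟨n, ⟨⟨h₁, -⟩, ⟨h₂, -⟩⟩, hl, hr⟩
    exact ⟨hl, hr, n, h₁, h₂⟩
  · rintro ⟨hl, hr, K, h₁, h₂⟩
    obtain ⟨n, hn₁, hn₂⟩ := ((h₁.eventually_lipschitzWith_dist_le x₀ x₀).and
      (h₂.eventually_lipschitzWith_dist_le x₀ x₀)).exists
    exact ⟨n, ⟨hn₁, hn₂⟩, hl, hr⟩
end

section
/- Let Y be a metric space. For any embedding g : [-1,1] → Y there exists a unique t ∈ (-1,1) such that μ(g([-1,t])) = μ(g([t,1])), where μ is the Morse μ-length; moreover t depends continuously on g in the compact-open topology on the space of embeddings. -/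
/-- Extension of a map on `[-1,1]` to all of `ℝ` via the projection onto `[-1,1]`. -/
noncomputable def extIcc {Y : Type*} [MetricSpace Y] (g : C(Set.Icc (-1 : ℝ) 1, Y)) : ℝ → Y :=
  fun x => g (Set.projIcc (-1 : ℝ) 1 (by norm_num) x)

namespace MorseAux

variable {X : Type*} [MetricSpace X] {f : ℝ → X} {a b : ℝ} {k : ℕ}

def chainSet (f : ℝ → X) (a b : ℝ) (k : ℕ) : Set ℝ :=
  {m : ℝ | ∃ c : Fin (k + 1) → ℝ, Monotone c ∧ (∀ i, c i ∈ Set.Icc a b) ∧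
    m = ⨅ i : Fin k, dist (f (c i.castSucc)) (f (c i.succ))}

lemma morseMuK_eq (f : ℝ → X) (a b : ℝ) (k : ℕ) :
    morseMuK f a b k = sSup (chainSet f a b k) := rfl

lemma zero_mem (hab : a ≤ b) : (0:ℝ) ∈ chainSet f a b k := by
  refine ⟨fun _ => a, monotone_const, fun _ => ⟨le_refl a, hab⟩, ?_⟩
  cases isEmpty_or_nonempty (Fin k) with
  | inl h => simp [Real.iInf_of_isEmpty]
  | inr h => simp

lemma nonneg_of_mem {m : ℝ} (hm : m ∈ chainSet f a b k) : 0 ≤ m := by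
  obtain ⟨c, -, -, rfl⟩ := hm
  exact Real.iInf_nonneg fun i => dist_nonneg

lemma bddAbove_chainSet {D : ℝ} (hD : ∀ x y, dist (f x) (f y) ≤ D) :
    BddAbove (chainSet f a b (k+1)) := by
  refine ⟨D, fun m hm => ?_⟩
  obtain ⟨c, -, -, rfl⟩ := hm
  exact le_trans (ciInf_le (Finite.bddBelow_range _) 0) (hD _ _)

lemma morseMuK_nonneg {D : ℝ} (hD : ∀ x y, dist (f x) (f y) ≤ D) (hab : a ≤ b) :
    0 ≤ morseMuK f a b (k+1) :=
  le_csSup (bddAbove_chainSet hD) (zero_mem hab)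

lemma morseMuK_le {D : ℝ} (hD : ∀ x y, dist (f x) (f y) ≤ D) :
    morseMuK f a b (k+1) ≤ D := by
  have hD0 : 0 ≤ D := le_trans dist_nonneg (hD a a)
  refine Real.sSup_le (fun m hm => ?_) hD0
  obtain ⟨c, -, -, rfl⟩ := hm
  exact le_trans (ciInf_le (Finite.bddBelow_range _) 0) (hD _ _)

lemma le_morseMuK {m : ℝ} {D : ℝ} (hD : ∀ x y, dist (f x) (f y) ≤ D)
    (hm : m ∈ chainSet f a b (k+1)) : m ≤ morseMuK f a b (k+1) :=
  le_csSup (bddAbove_chainSet hD) hm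

end MorseAux

namespace MorseAux

variable {X : Type*} [MetricSpace X] {f f' : ℝ → X} {a b a' b' : ℝ} {k : ℕ}

/-- Master comparison lemma: transporting chains along a monotone map. -/
lemma morseMuK_le_add {D ε : ℝ} (hD : ∀ x y, dist (f x) (f y) ≤ D)
    (h : ℝ → ℝ) (hmono : Monotone h)
    (hmaps : ∀ x ∈ Set.Icc a' b', h x ∈ Set.Icc a b)
    (hclose : ∀ x ∈ Set.Icc a' b', dist (f' x) (f (h x)) ≤ ε)
    (hab : a ≤ b) (hε : 0 ≤ ε) :
    morseMuK f' a' b' (k+1) ≤ morseMuK f a b (k+1) + 2 * ε := by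
  have hμ0 : 0 ≤ morseMuK f a b (k+1) := morseMuK_nonneg hD hab
  refine Real.sSup_le (fun m hm => ?_) (by linarith)
  obtain ⟨c, hc, hcI, rfl⟩ := hm
  set B : Fin (k+1) → ℝ := fun i => dist (f (h (c i.castSucc))) (f (h (c i.succ))) with hB
  have hmem : (⨅ i, B i) ∈ chainSet f a b (k+1) :=
    ⟨fun i => h (c i), fun i j hij => hmono (hc hij), fun i => hmaps _ (hcI i), rfl⟩
  have key : (⨅ i : Fin (k+1), dist (f' (c i.castSucc)) (f' (c i.succ))) - 2*ε ≤ ⨅ i, B i := by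
    refine le_ciInf fun i => ?_
    have h1 := ciInf_le (Finite.bddBelow_range
      (fun i : Fin (k+1) => dist (f' (c i.castSucc)) (f' (c i.succ)))) i
    have h2 : dist (f' (c i.castSucc)) (f' (c i.succ)) ≤
        ε + B i + ε := by
      have t4 := dist_triangle4 (f' (c i.castSucc)) (f (h (c i.castSucc)))
        (f (h (c i.succ))) (f' (c i.succ))
      have e1 := hclose _ (hcI i.castSucc)
      have e2 := hclose _ (hcI i.succ)
      rw [dist_comm (f (h (c i.succ)))] at t4
      linarith
    linarith
  have := le_morseMuK hD hmem
  linarith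

/-- Monotonicity under interval inclusion. -/
lemma morseMuK_mono {D : ℝ} (hD : ∀ x y, dist (f x) (f y) ≤ D)
    (ha : a ≤ a') (hb : b' ≤ b) (hab' : a' ≤ b') :
    morseMuK f a' b' (k+1) ≤ morseMuK f a b (k+1) := by
  refine csSup_le_csSup (bddAbove_chainSet hD) ⟨0, zero_mem hab'⟩ ?_
  rintro m ⟨c, hc, hcI, rfl⟩
  exact ⟨c, hc, fun i => ⟨le_trans ha (hcI i).1, le_trans (hcI i).2 hb⟩, rfl⟩

/-- Appending an endpoint: `μ_{k+2}(a,b) ≥ min (μ_{k+1}(a,s)) δ`. -/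
lemma min_le_morseMuK_succ {D δ s : ℝ} (hD : ∀ x y, dist (f x) (f y) ≤ D)
    (has : a ≤ s) (hsb : s ≤ b)
    (hδ : ∀ x ∈ Set.Icc a s, δ ≤ dist (f x) (f b)) :
    min (morseMuK f a s (k+1)) δ ≤ morseMuK f a b (k+2) := by
  have key : ∀ m ∈ chainSet f a s (k+1), min m δ ≤ morseMuK f a b (k+2) := by
    rintro m ⟨c, hc, hcI, rfl⟩
    set c' : Fin (k+3) → ℝ := Fin.snoc c b with hc'
    have hlast : c' (Fin.last (k+2)) = b := Fin.snoc_last _ _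
    have hcast : ∀ i : Fin (k+2), c' i.castSucc = c i := fun i => Fin.snoc_castSucc _ _ _
    have hsucc : ∀ i : Fin (k+1), c' i.castSucc.succ = c i.succ := by
      intro i; rw [Fin.succ_castSucc]; exact hcast _
    have hc'm : Monotone c' := by
      rw [Fin.monotone_iff_le_succ]
      intro i
      rcases Fin.eq_castSucc_or_eq_last i with ⟨i', rfl⟩ | rfl
      · rw [hcast, hsucc]
        exact hc (Fin.castSucc_le_succ i')
      · rw [Fin.succ_last, hlast, hcast]
        exact le_trans (hcI _).2 hsb
    have hc'I : ∀ i, c' i ∈ Set.Icc a b := by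
      intro i
      rcases Fin.eq_castSucc_or_eq_last i with ⟨i', rfl⟩ | rfl
      · rw [hcast]; exact ⟨(hcI i').1, le_trans (hcI i').2 hsb⟩
      · rw [hlast]; exact ⟨le_trans has hsb, le_refl b⟩
    have hmem : (⨅ i : Fin (k+2), dist (f (c' i.castSucc)) (f (c' i.succ)))
        ∈ chainSet f a b (k+2) := ⟨c', hc'm, hc'I, rfl⟩
    refine le_trans ?_ (le_morseMuK hD hmem)
    refine le_ciInf fun i => ?_
    rcases Fin.eq_castSucc_or_eq_last i with ⟨i', rfl⟩ | rfl
    · rw [hcast, hsucc]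
      exact le_trans (min_le_left _ _) (ciInf_le (Finite.bddBelow_range _) i')
    · rw [Fin.succ_last, hlast, hcast]
      exact le_trans (min_le_right _ _) (hδ _ (hcI _))
  by_contra hcon
  push_neg at hcon
  have h1 : morseMuK f a b (k+2) < sSup (chainSet f a s (k+1)) :=
    lt_of_lt_of_le hcon (min_le_left _ _)
  obtain ⟨m, hm, hmgt⟩ := exists_lt_of_lt_csSup ⟨0, zero_mem has⟩ h1
  exact absurd (key m hm)
    (not_le_of_gt (lt_min hmgt (lt_of_lt_of_le hcon (min_le_right _ _))))

end MorseAux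

namespace MorseAux

variable {X : Type*} [MetricSpace X] {f : ℝ → X} {a b : ℝ} {k : ℕ}

lemma chainSet_empty (hba : b < a) : chainSet f a b k = ∅ := by
  ext m
  simp only [Set.mem_empty_iff_false, iff_false]
  rintro ⟨c, -, hcI, -⟩
  exact absurd (le_trans (hcI 0).1 (hcI 0).2) (not_le_of_gt hba)

/-- `μ_k` is nonincreasing in `k`. -/
lemma morseMuK_antitone {D : ℝ} (hD : ∀ x y, dist (f x) (f y) ≤ D) :
    morseMuK f a b (k+2) ≤ morseMuK f a b (k+1) := by
  rcases le_or_gt a b with hab | hba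
  · refine Real.sSup_le (fun m hm => ?_) (morseMuK_nonneg hD hab)
    obtain ⟨c, hc, hcI, rfl⟩ := hm
    set d : Fin (k+2) → ℝ := c ∘ Fin.castSucc with hd
    have hmem : (⨅ i : Fin (k+1), dist (f (d i.castSucc)) (f (d i.succ)))
        ∈ chainSet f a b (k+1) :=
      ⟨d, hc.comp Fin.strictMono_castSucc.monotone, fun i => hcI _, rfl⟩
    refine le_trans ?_ (le_morseMuK hD hmem)
    refine le_ciInf fun i => ?_
    have e2 : d i.succ = c i.castSucc.succ := by
      show c i.succ.castSucc = c i.castSucc.succ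
      rw [Fin.succ_castSucc]
    rw [show d i.castSucc = c i.castSucc.castSucc from rfl, e2]
    exact ciInf_le (Finite.bddBelow_range _) i.castSucc
  · rw [morseMuK_eq, morseMuK_eq, chainSet_empty hba, chainSet_empty hba]

/-- `μ_1(a,b) ≥ dist (f a) (f b)`. -/
lemma dist_le_morseMuK_one {D : ℝ} (hD : ∀ x y, dist (f x) (f y) ≤ D) (hab : a ≤ b) :
    dist (f a) (f b) ≤ morseMuK f a b 1 := by
  set c : Fin 2 → ℝ := fun i => if i = 0 then a else b with hcdef
  have hc : Monotone c := by
    intro i j hij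
    fin_cases i <;> fin_cases j <;> simp [hcdef]
    · exact hab
    · exact absurd hij (by decide)
  have hcI : ∀ i, c i ∈ Set.Icc a b := by
    intro i; fin_cases i <;> simp [hcdef, hab, le_refl]
  have hmem : (⨅ i : Fin 1, dist (f (c i.castSucc)) (f (c i.succ))) ∈ chainSet f a b 1 :=
    ⟨c, hc, hcI, rfl⟩
  have e0 : c (Fin.castSucc (0 : Fin 1)) = a := by simp [hcdef]
  have e1 : c (Fin.succ (0 : Fin 1)) = b := by
    have : (Fin.succ (0 : Fin 1)) ≠ 0 := by decide
    simp [hcdef, this]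
  have heq : (⨅ i : Fin 1, dist (f (c i.castSucc)) (f (c i.succ))) = dist (f a) (f b) := by
    rw [ciInf_unique]
    show dist (f (c (Fin.castSucc (0 : Fin 1)))) (f (c (Fin.succ (0 : Fin 1)))) = _
    rw [e0, e1]
  rw [← heq]
  exact le_morseMuK hD hmem

/-- Telescoping lower bound for monotone chains with all gaps at least `η`. -/
lemma chain_gap {n : ℕ} (c : Fin (n+1) → ℝ) (hc : Monotone c) {η : ℝ}
    (h : ∀ i : Fin n, η ≤ c i.succ - c i.castSucc) :
    c 0 + n * η ≤ c (Fin.last n) := by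
  induction n with
  | zero => simp
  | succ n ih =>
    have h1 := ih (c ∘ Fin.castSucc) (hc.comp Fin.strictMono_castSucc.monotone)
      (fun i => by
        have h2 : (c ∘ Fin.castSucc) i.succ = c i.castSucc.succ := by
          show c i.succ.castSucc = c i.castSucc.succ
          rw [Fin.succ_castSucc]
        rw [h2]
        exact h i.castSucc)
    have h2 := h (Fin.last n)
    have e0 : (c ∘ Fin.castSucc) 0 = c 0 := by
      show c (Fin.castSucc 0) = c 0; norm_num
    have e1 : (c ∘ Fin.castSucc) (Fin.last n) = c (Fin.last n).castSucc := rfl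
    have e2 : (Fin.last n).succ = Fin.last (n+1) := Fin.succ_last n
    rw [e0, e1] at h1
    rw [e2] at h2
    push_cast
    linarith

/-- For any `ε > 0` there is `k` with `μ_{k+1}(a,b) ≤ ε`. -/
lemma exists_morseMuK_le (hf : UniformContinuous f) (hab : a ≤ b) {ε : ℝ} (hε : 0 < ε) :
    ∃ k : ℕ, morseMuK f a b (k+1) ≤ ε := by
  obtain ⟨η, hη, hmod⟩ := Metric.uniformContinuous_iff.1 hf ε hε
  obtain ⟨n, hn⟩ := exists_nat_gt ((b - a) / η)
  refine ⟨n, Real.sSup_le (fun m hm => ?_) hε.le⟩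
  obtain ⟨c, hc, hcI, rfl⟩ := hm
  by_contra hcon
  push_neg at hcon
  have hgap : ∀ i : Fin (n+1), η ≤ c i.succ - c i.castSucc := by
    intro i
    by_contra hlt
    push_neg at hlt
    have hdle : dist (c i.castSucc) (c i.succ) < η := by
      rw [Real.dist_eq, abs_sub_comm, abs_of_nonneg (by
        have := hc (Fin.castSucc_le_succ i); linarith)]
      exact hlt
    have hlt2 := hmod hdle
    have hle := ciInf_le (Finite.bddBelow_range
      fun j : Fin (n+1) => dist (f (c j.castSucc)) (f (c j.succ))) i
    linarith
  have htel := chain_gap c hc hgap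
  have hub : c (Fin.last (n+1)) ≤ b := (hcI _).2
  have hlb : a ≤ c 0 := (hcI _).1
  have hba : (b - a) < (n+1) * η := by
    have h1 : (b - a) / η < n + 1 := lt_of_lt_of_le hn (by push_cast; linarith)
    calc b - a = ((b-a)/η) * η := by field_simp
    _ < (n+1) * η := mul_lt_mul_of_pos_right h1 hη
  push_cast at htel
  linarith

/-- Degenerate interval: `μ_k(t,t) = 0`. -/
lemma morseMuK_self (t : ℝ) : morseMuK f t t k = 0 := by
  have : chainSet f t t k = {0} := by
    ext m
    constructor
    · rintro ⟨c, hc, hcI, rfl⟩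
      have hct : ∀ i, c i = t := fun i => le_antisymm (hcI i).2 (hcI i).1
      simp only [hct, dist_self, Set.mem_singleton_iff]
      cases isEmpty_or_nonempty (Fin k) with
      | inl h => simp [Real.iInf_of_isEmpty]
      | inr h => simp
    · rintro rfl
      exact zero_mem le_rfl
  rw [morseMuK_eq, this, csSup_singleton]

end MorseAux

namespace MorseAux

variable {X : Type*} [MetricSpace X] {f f' : ℝ → X} {a b a' b' s t : ℝ} {k : ℕ}

lemma morseMuK_nonneg' {D : ℝ} (hD : ∀ x y, dist (f x) (f y) ≤ D) {n : ℕ} :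
    0 ≤ morseMuK f a b (n + 1) := by
  rcases le_or_gt a b with hab | hba
  · exact morseMuK_nonneg hD hab
  · rw [morseMuK_eq, chainSet_empty hba, Real.sSup_empty]

lemma summable_morse {D : ℝ} (hD : ∀ x y, dist (f x) (f y) ≤ D) :
    Summable (fun k : ℕ => (1 / 2 ^ (k + 1) : ℝ) * morseMuK f a b (k + 1)) := by
  have hD0 : 0 ≤ D := le_trans dist_nonneg (hD a a)
  have hsum : Summable (fun k : ℕ => ((1:ℝ) / 2) ^ k * (D / 2)) :=
    summable_geometric_two.mul_right _
  refine Summable.of_nonneg_of_le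
    (fun k => mul_nonneg (by positivity) (morseMuK_nonneg' hD)) (fun k => ?_) hsum
  have h1 : ((1:ℝ) / 2 ^ (k+1)) = ((1:ℝ)/2)^k * (1/2) := by
    rw [div_pow, one_pow, pow_succ]; ring
  rw [h1]
  have := morseMuK_le (a := a) (b := b) (k := k) hD
  have h2 : (0:ℝ) < ((1:ℝ)/2)^k * (1/2) := by positivity
  calc ((1:ℝ)/2)^k * (1/2) * morseMuK f a b (k+1) ≤ ((1:ℝ)/2)^k * (1/2) * D :=
        mul_le_mul_of_nonneg_left this h2.le
    _ = ((1:ℝ)/2)^k * (D/2) := by ring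

lemma morseMu_nonneg {D : ℝ} (hD : ∀ x y, dist (f x) (f y) ≤ D) :
    0 ≤ morseMu f a b :=
  tsum_nonneg fun k => mul_nonneg (by positivity) (morseMuK_nonneg' hD)

lemma morseMu_self (f : ℝ → X) (t : ℝ) : morseMu f t t = 0 := by
  unfold morseMu
  simp [morseMuK_self]

lemma morseMu_mono {D : ℝ} (hD : ∀ x y, dist (f x) (f y) ≤ D)
    (ha : a ≤ a') (hb : b' ≤ b) (hab' : a' ≤ b') :
    morseMu f a' b' ≤ morseMu f a b := by
  refine Summable.tsum_le_tsum (fun k => ?_) (summable_morse hD) (summable_morse hD)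
  exact mul_le_mul_of_nonneg_left (morseMuK_mono hD ha hb hab') (by positivity)

/-- Master comparison at the `μ` level. -/
lemma morseMu_le_add {D D' ε : ℝ} (hD : ∀ x y, dist (f x) (f y) ≤ D)
    (hD' : ∀ x y, dist (f' x) (f' y) ≤ D')
    (h : ℝ → ℝ) (hmono : Monotone h)
    (hmaps : ∀ x ∈ Set.Icc a' b', h x ∈ Set.Icc a b)
    (hclose : ∀ x ∈ Set.Icc a' b', dist (f' x) (f (h x)) ≤ ε)
    (hab : a ≤ b) (hε : 0 ≤ ε) :
    morseMu f' a' b' ≤ morseMu f a b + 2 * ε := by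
  have h2 : ∀ k : ℕ, (1 / 2 ^ (k + 1) : ℝ) * morseMuK f' a' b' (k + 1) ≤
      (1 / 2 ^ (k + 1) : ℝ) * morseMuK f a b (k + 1) + (2*ε) / 2 / 2 ^ k := by
    intro k
    have := morseMuK_le_add (k := k) hD h hmono hmaps hclose hab hε
    have hw : (0:ℝ) < 1 / 2 ^ (k+1) := by positivity
    have := mul_le_mul_of_nonneg_left this hw.le
    have he : (1 / 2 ^ (k+1) : ℝ) * (morseMuK f a b (k+1) + 2*ε)
        = (1 / 2 ^ (k + 1) : ℝ) * morseMuK f a b (k + 1) + (2*ε) / 2 / 2 ^ k := by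
      rw [pow_succ]; ring
    linarith [he ▸ this]
  have hsum2 : Summable (fun k : ℕ => (1 / 2 ^ (k + 1) : ℝ) * morseMuK f a b (k + 1)
      + (2*ε) / 2 / 2 ^ k) :=
    (summable_morse hD).add (by
      have : Summable (fun k : ℕ => ((1:ℝ)/2)^k * ((2*ε)/2)) :=
        summable_geometric_two.mul_right _
      refine this.congr fun k => ?_
      rw [div_pow, one_pow]
      ring)
  calc morseMu f' a' b' ≤ ∑' k : ℕ, ((1 / 2 ^ (k + 1) : ℝ) * morseMuK f a b (k + 1)
        + (2*ε) / 2 / 2 ^ k) := Summable.tsum_le_tsum h2 (summable_morse hD') hsum2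
    _ = morseMu f a b + 2 * ε := by
        rw [Summable.tsum_add (summable_morse hD) (by
          have : Summable (fun k : ℕ => ((1:ℝ)/2)^k * ((2*ε)/2)) :=
            summable_geometric_two.mul_right _
          refine this.congr fun k => ?_
          rw [div_pow, one_pow]; ring), tsum_geometric_two' (2*ε)]
        rfl

lemma half_dist_le_morseMu {D : ℝ} (hD : ∀ x y, dist (f x) (f y) ≤ D) (hab : a ≤ b) :
    (1/2) * dist (f a) (f b) ≤ morseMu f a b := by
  have h0 := Summable.le_tsum (summable_morse (a := a) (b := b) hD) 0
    (fun j _ => mul_nonneg (by positivity) (morseMuK_nonneg' hD))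
  have h1 : ((1:ℝ) / 2 ^ (0 + 1)) * morseMuK f a b (0 + 1) = (1/2) * morseMuK f a b 1 := by
    norm_num
  rw [h1] at h0
  refine le_trans ?_ h0
  have := dist_le_morseMuK_one hD hab
  linarith

end MorseAux

namespace MorseAux

variable {X : Type*} [MetricSpace X] {f : ℝ → X} {a b s : ℝ} {k : ℕ}

/-- Prepending an endpoint: `μ_{k+2}(a,b) ≥ min (μ_{k+1}(s,b)) δ`. -/
lemma min_le_morseMuK_succ_left {D δ : ℝ} (hD : ∀ x y, dist (f x) (f y) ≤ D)
    (has : a ≤ s) (hsb : s ≤ b)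
    (hδ : ∀ x ∈ Set.Icc s b, δ ≤ dist (f x) (f a)) :
    min (morseMuK f s b (k+1)) δ ≤ morseMuK f a b (k+2) := by
  have key : ∀ m ∈ chainSet f s b (k+1), min m δ ≤ morseMuK f a b (k+2) := by
    rintro m ⟨c, hc, hcI, rfl⟩
    set c' : Fin (k+3) → ℝ := Fin.cons a c with hc'
    have hzero : c' 0 = a := rfl
    have hsucc : ∀ j : Fin (k+2), c' j.succ = c j := fun j => Fin.cons_succ _ _ _
    have hcs : ∀ j : Fin (k+1), c' j.succ.castSucc = c j.castSucc := by
      intro j; rw [← Fin.succ_castSucc]; exact hsucc _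
    have hc'm : Monotone c' := by
      rw [Fin.monotone_iff_le_succ]
      intro i
      induction i using Fin.cases with
      | zero =>
        rw [Fin.castSucc_zero, hzero, hsucc]
        exact le_trans has (hcI 0).1
      | succ j =>
        rw [hcs, hsucc]
        exact hc (Fin.castSucc_le_succ j)
    have hc'I : ∀ i, c' i ∈ Set.Icc a b := by
      intro i
      induction i using Fin.cases with
      | zero => exact ⟨le_rfl, has.trans hsb⟩
      | succ j =>
        rw [hsucc]
        exact ⟨has.trans (hcI j).1, (hcI j).2⟩
    have hmem : (⨅ i : Fin (k+2), dist (f (c' i.castSucc)) (f (c' i.succ)))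
        ∈ chainSet f a b (k+2) := ⟨c', hc'm, hc'I, rfl⟩
    refine le_trans ?_ (le_morseMuK hD hmem)
    refine le_ciInf fun i => ?_
    induction i using Fin.cases with
    | zero =>
      rw [Fin.castSucc_zero, hzero, hsucc]
      rw [dist_comm]
      exact le_trans (min_le_right _ _) (hδ _ (hcI 0))
    | succ j =>
      rw [hcs, hsucc]
      exact le_trans (min_le_left _ _) (ciInf_le (Finite.bddBelow_range _) j)
  by_contra hcon
  push_neg at hcon
  have h1 : morseMuK f a b (k+2) < sSup (chainSet f s b (k+1)) :=
    lt_of_lt_of_le hcon (min_le_left _ _)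
  obtain ⟨m, hm, hmgt⟩ := exists_lt_of_lt_csSup ⟨0, zero_mem hsb⟩ h1
  exact absurd (key m hm)
    (not_le_of_gt (lt_min hmgt (lt_of_lt_of_le hcon (min_le_right _ _))))

/-- Strict monotonicity of `μ` for proper subarcs (right end). -/
lemma morseMu_strict_right {D : ℝ} (hD : ∀ x y, dist (f x) (f y) ≤ D)
    (hf : UniformContinuous f) (hinj : Set.InjOn f (Set.Icc a b))
    (has : a ≤ s) (hsb : s < b) :
    morseMu f a s < morseMu f a b := by
  have hab : a ≤ b := has.trans hsb.le
  have hK : IsCompact (f '' Set.Icc a s) := (isCompact_Icc).image hf.continuous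
  have hKne : (f '' Set.Icc a s).Nonempty := ⟨f a, a, ⟨le_rfl, has⟩, rfl⟩
  have hfbK : f b ∉ f '' Set.Icc a s := by
    rintro ⟨x, hx, hfx⟩
    have hxb : x = b := hinj ⟨hx.1, hx.2.trans hsb.le⟩ ⟨hab, le_rfl⟩ hfx
    exact absurd (hxb ▸ hx.2) (not_le_of_gt hsb)
  set δ := Metric.infDist (f b) (f '' Set.Icc a s) with hδdef
  have hδpos : 0 < δ := (hK.isClosed.notMem_iff_infDist_pos hKne).1 hfbK
  have hδ : ∀ x ∈ Set.Icc a s, δ ≤ dist (f x) (f b) := by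
    intro x hx
    rw [dist_comm]
    exact Metric.infDist_le_dist_of_mem ⟨x, hx, rfl⟩
  have hle : ∀ n : ℕ, morseMuK f a s (n+1) ≤ morseMuK f a b (n+1) :=
    fun n => morseMuK_mono hD le_rfl hsb.le has
  have key : ∃ n : ℕ, morseMuK f a s (n+1) < morseMuK f a b (n+1) := by
    by_cases hc : ∀ n : ℕ, min (morseMuK f a s (n+1)) δ ≤ morseMuK f a s (n+2)
    · by_cases h1 : morseMuK f a s 1 ≤ 0
      · refine ⟨0, lt_of_le_of_lt h1 ?_⟩
        have hne : f a ≠ f b := fun h =>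
          absurd (hinj ⟨le_rfl, hab⟩ ⟨hab, le_rfl⟩ h) (ne_of_lt (lt_of_le_of_lt has hsb))
        have := dist_le_morseMuK_one hD hab
        have hpos : 0 < dist (f a) (f b) := dist_pos.2 hne
        linarith
      · push_neg at h1
        have hind : ∀ n : ℕ, min (morseMuK f a s 1) δ ≤ morseMuK f a s (n+1) := by
          intro n
          induction n with
          | zero => exact min_le_left _ _
          | succ n ih => exact le_trans (le_min ih (min_le_right _ _)) (hc n)
        have hmin : 0 < min (morseMuK f a s 1) δ := lt_min h1 hδpos
        obtain ⟨n, hn⟩ := exists_morseMuK_le hf has (half_pos hmin)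
        exact absurd (le_trans (hind n) hn) (by intro hh; linarith)
    · push_neg at hc
      obtain ⟨n, hn⟩ := hc
      exact ⟨n+1, lt_of_lt_of_le hn (min_le_morseMuK_succ hD has hsb.le hδ)⟩
  obtain ⟨n, hn⟩ := key
  refine Summable.tsum_lt_tsum (fun k => mul_le_mul_of_nonneg_left (hle k) (by positivity))
    (mul_lt_mul_of_pos_left hn (by positivity : (0:ℝ) < 1/2^(n+1)))
    (summable_morse hD) (summable_morse hD)

/-- Strict monotonicity of `μ` for proper subarcs (left end). -/
lemma morseMu_strict_left {D : ℝ} (hD : ∀ x y, dist (f x) (f y) ≤ D)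
    (hf : UniformContinuous f) (hinj : Set.InjOn f (Set.Icc a b))
    (has : a < s) (hsb : s ≤ b) :
    morseMu f s b < morseMu f a b := by
  have hab : a ≤ b := has.le.trans hsb
  have hK : IsCompact (f '' Set.Icc s b) := (isCompact_Icc).image hf.continuous
  have hKne : (f '' Set.Icc s b).Nonempty := ⟨f s, s, ⟨le_rfl, hsb⟩, rfl⟩
  have hfaK : f a ∉ f '' Set.Icc s b := by
    rintro ⟨x, hx, hfx⟩
    have hxa : x = a := hinj ⟨has.le.trans hx.1, hx.2⟩ ⟨le_rfl, hab⟩ hfx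
    exact absurd (hxa ▸ hx.1) (not_le_of_gt has)
  set δ := Metric.infDist (f a) (f '' Set.Icc s b) with hδdef
  have hδpos : 0 < δ := (hK.isClosed.notMem_iff_infDist_pos hKne).1 hfaK
  have hδ : ∀ x ∈ Set.Icc s b, δ ≤ dist (f x) (f a) := by
    intro x hx
    rw [dist_comm]
    exact Metric.infDist_le_dist_of_mem ⟨x, hx, rfl⟩
  have hle : ∀ n : ℕ, morseMuK f s b (n+1) ≤ morseMuK f a b (n+1) :=
    fun n => morseMuK_mono hD has.le le_rfl hsb
  have key : ∃ n : ℕ, morseMuK f s b (n+1) < morseMuK f a b (n+1) := by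
    by_cases hc : ∀ n : ℕ, min (morseMuK f s b (n+1)) δ ≤ morseMuK f s b (n+2)
    · by_cases h1 : morseMuK f s b 1 ≤ 0
      · refine ⟨0, lt_of_le_of_lt h1 ?_⟩
        have hne : f a ≠ f b := fun h =>
          absurd (hinj ⟨le_rfl, hab⟩ ⟨hab, le_rfl⟩ h) (ne_of_lt (lt_of_lt_of_le has hsb))
        have := dist_le_morseMuK_one hD hab
        have hpos : 0 < dist (f a) (f b) := dist_pos.2 hne
        linarith
      · push_neg at h1
        have hind : ∀ n : ℕ, min (morseMuK f s b 1) δ ≤ morseMuK f s b (n+1) := by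
          intro n
          induction n with
          | zero => exact min_le_left _ _
          | succ n ih => exact le_trans (le_min ih (min_le_right _ _)) (hc n)
        have hmin : 0 < min (morseMuK f s b 1) δ := lt_min h1 hδpos
        obtain ⟨n, hn⟩ := exists_morseMuK_le hf hsb (half_pos hmin)
        exact absurd (le_trans (hind n) hn) (by intro hh; linarith)
    · push_neg at hc
      obtain ⟨n, hn⟩ := hc
      exact ⟨n+1, lt_of_lt_of_le hn (min_le_morseMuK_succ_left hD has.le hsb hδ)⟩
  obtain ⟨n, hn⟩ := key
  refine Summable.tsum_lt_tsum (fun k => mul_le_mul_of_nonneg_left (hle k) (by positivity))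
    (mul_lt_mul_of_pos_left hn (by positivity : (0:ℝ) < 1/2^(n+1)))
    (summable_morse hD) (summable_morse hD)

end MorseAux

namespace MorseAux

variable {Y : Type*} [MetricSpace Y]

lemma uc_extIcc (g : C(Set.Icc (-1 : ℝ) 1, Y)) : UniformContinuous (extIcc g) := by
  have hcs : CompactSpace (Set.Icc (-1 : ℝ) 1) := isCompact_iff_compactSpace.mp isCompact_Icc
  exact (CompactSpace.uniformContinuous_of_continuous g.continuous).comp
    (LipschitzWith.projIcc (by norm_num : (-1:ℝ) ≤ 1)).uniformContinuous

lemma exists_bound (g : C(Set.Icc (-1 : ℝ) 1, Y)) :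
    ∃ D, ∀ x y, dist (extIcc g x) (extIcc g y) ≤ D := by
  have hb : Bornology.IsBounded (Set.range g) := (isCompact_range g.continuous).isBounded
  exact ⟨Metric.diam (Set.range g), fun x y =>
    Metric.dist_le_diam_of_mem hb ⟨_, rfl⟩ ⟨_, rfl⟩⟩

lemma injOn_extIcc {g : C(Set.Icc (-1 : ℝ) 1, Y)} (hg : Function.Injective g) :
    Set.InjOn (extIcc g) (Set.Icc (-1 : ℝ) 1) := by
  intro x hx y hy hxy
  have h1 : Set.projIcc (-1 : ℝ) 1 (by norm_num) x = ⟨x, hx⟩ := Set.projIcc_of_mem _ hx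
  have h2 : Set.projIcc (-1 : ℝ) 1 (by norm_num) y = ⟨y, hy⟩ := Set.projIcc_of_mem _ hy
  have := hg (show g (Set.projIcc (-1:ℝ) 1 (by norm_num) x)
    = g (Set.projIcc (-1:ℝ) 1 (by norm_num) y) from hxy)
  rw [h1, h2] at this
  exact Subtype.mk_eq_mk.1 this

/-- The balance function. -/
noncomputable def bal (g : C(Set.Icc (-1 : ℝ) 1, Y)) (t : ℝ) : ℝ :=
  morseMu (extIcc g) (-1) t - morseMu (extIcc g) t 1

lemma bal_strictMono {g : C(Set.Icc (-1 : ℝ) 1, Y)} (hg : Function.Injective g)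
    {t₁ t₂ : ℝ} (h1 : -1 ≤ t₁) (h12 : t₁ < t₂) (h2 : t₂ ≤ 1) :
    bal g t₁ < bal g t₂ := by
  obtain ⟨D, hD⟩ := exists_bound g
  have huc := uc_extIcc g
  have hinj := injOn_extIcc hg
  have hA : morseMu (extIcc g) (-1) t₁ < morseMu (extIcc g) (-1) t₂ :=
    morseMu_strict_right hD huc
      (hinj.mono (Set.Icc_subset_Icc le_rfl h2)) h1 h12
  have hB : morseMu (extIcc g) t₂ 1 ≤ morseMu (extIcc g) t₁ 1 :=
    morseMu_mono hD h12.le le_rfl h2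
  unfold bal
  linarith

lemma bal_neg_left {g : C(Set.Icc (-1 : ℝ) 1, Y)} (hg : Function.Injective g) :
    bal g (-1) < 0 := by
  obtain ⟨D, hD⟩ := exists_bound g
  have hne : extIcc g (-1) ≠ extIcc g 1 := by
    intro h
    have := injOn_extIcc hg (by norm_num) (by norm_num) h
    norm_num at this
  have h1 : (1/2 : ℝ) * dist (extIcc g (-1)) (extIcc g 1) ≤ morseMu (extIcc g) (-1) 1 :=
    half_dist_le_morseMu hD (by norm_num)
  have h2 : 0 < dist (extIcc g (-1)) (extIcc g 1) := dist_pos.2 hne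
  unfold bal
  rw [morseMu_self]
  linarith

lemma bal_pos_right {g : C(Set.Icc (-1 : ℝ) 1, Y)} (hg : Function.Injective g) :
    0 < bal g 1 := by
  obtain ⟨D, hD⟩ := exists_bound g
  have hne : extIcc g (-1) ≠ extIcc g 1 := by
    intro h
    have := injOn_extIcc hg (by norm_num) (by norm_num) h
    norm_num at this
  have h1 : (1/2 : ℝ) * dist (extIcc g (-1)) (extIcc g 1) ≤ morseMu (extIcc g) (-1) 1 :=
    half_dist_le_morseMu hD (by norm_num)
  have h2 : 0 < dist (extIcc g (-1)) (extIcc g 1) := dist_pos.2 hne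
  unfold bal
  rw [morseMu_self]
  linarith

/-- Continuity of `bal g` on `[-1,1]`. -/
lemma bal_continuousOn (g : C(Set.Icc (-1 : ℝ) 1, Y)) :
    ContinuousOn (bal g) (Set.Icc (-1 : ℝ) 1) := by
  obtain ⟨D, hD⟩ := exists_bound g
  have huc := uc_extIcc g
  rw [Metric.continuousOn_iff]
  intro t₀ ht₀ ε hε
  obtain ⟨η, hη, hmod⟩ := Metric.uniformContinuous_iff.1 huc (ε/5) (by linarith)
  refine ⟨η, hη, fun t ht hdist => ?_⟩
  -- main estimate, symmetric in t, t₀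
  have main : ∀ u v : ℝ, u ∈ Set.Icc (-1:ℝ) 1 → v ∈ Set.Icc (-1:ℝ) 1 → u ≤ v → v - u < η →
      bal g v - bal g u ≤ 4 * (ε/5) ∧ 0 ≤ bal g v - bal g u := by
    intro u v hu hv huv hvu
    have hA1 : morseMu (extIcc g) (-1) u ≤ morseMu (extIcc g) (-1) v :=
      morseMu_mono hD le_rfl huv hu.1
    have hB1 : morseMu (extIcc g) v 1 ≤ morseMu (extIcc g) u 1 :=
      morseMu_mono hD huv le_rfl hv.2
    have hA2 : morseMu (extIcc g) (-1) v ≤ morseMu (extIcc g) (-1) u + 2 * (ε/5) := by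
      refine morseMu_le_add hD hD (fun x => min x u)
        (fun x y hxy => min_le_min hxy le_rfl) (fun x hx => ?_) (fun x hx => ?_) hu.1
        (by linarith)
      · exact ⟨le_min hx.1 hu.1, min_le_right _ _⟩
      · show dist (extIcc g x) (extIcc g (min x u)) ≤ ε / 5
        refine (hmod ?_).le
        rw [Real.dist_eq, abs_of_nonneg (sub_nonneg.2 (min_le_left _ _))]
        rcases le_total x u with h | h
        · rw [min_eq_left h]; simpa using hη
        · rw [min_eq_right h]
          have : x ≤ v := hx.2
          linarith
    have hB2 : morseMu (extIcc g) u 1 ≤ morseMu (extIcc g) v 1 + 2 * (ε/5) := by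
      refine morseMu_le_add hD hD (fun x => max x v)
        (fun x y hxy => max_le_max hxy le_rfl) (fun x hx => ?_) (fun x hx => ?_) hv.2
        (by linarith)
      · exact ⟨le_max_right _ _, max_le hx.2 hv.2⟩
      · show dist (extIcc g x) (extIcc g (max x v)) ≤ ε / 5
        refine (hmod ?_).le
        rw [Real.dist_eq, abs_of_nonpos (sub_nonpos.2 (le_max_left _ _))]
        rcases le_total v x with h | h
        · rw [max_eq_left h]; simp; linarith
        · rw [max_eq_right h]
          have : u ≤ x := hx.1
          linarith
    constructor
    · unfold bal; linarith
    · unfold bal; linarith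
  rcases le_total t t₀ with h | h
  · obtain ⟨h1, h2⟩ := main t t₀ ht ht₀ h (by
      rw [Real.dist_eq] at hdist
      have := abs_lt.1 hdist
      linarith [this.1])
    rw [Real.dist_eq, abs_of_nonpos (by linarith)]
    linarith
  · obtain ⟨h1, h2⟩ := main t₀ t ht₀ ht h (by
      rw [Real.dist_eq] at hdist
      have := abs_lt.1 hdist
      linarith [this.2])
    rw [Real.dist_eq, abs_of_nonneg (by linarith)]
    linarith

/-- Lipschitz-type dependence of `bal` on `g`. -/
lemma bal_close (g₁ g₂ : C(Set.Icc (-1 : ℝ) 1, Y)) {t : ℝ} (ht : t ∈ Set.Icc (-1:ℝ) 1)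
    {d : ℝ} (hd : 0 ≤ d) (hgd : dist g₁ g₂ ≤ d) :
    |bal g₁ t - bal g₂ t| ≤ 4 * d := by
  obtain ⟨D₁, hD₁⟩ := exists_bound g₁
  obtain ⟨D₂, hD₂⟩ := exists_bound g₂
  have hclose : ∀ x : ℝ, dist (extIcc g₁ x) (extIcc g₂ x) ≤ d := by
    intro x
    exact le_trans (ContinuousMap.dist_apply_le_dist _) hgd
  have hclose' : ∀ x : ℝ, dist (extIcc g₂ x) (extIcc g₁ x) ≤ d := by
    intro x; rw [dist_comm]; exact hclose x
  have hA1 : morseMu (extIcc g₁) (-1) t ≤ morseMu (extIcc g₂) (-1) t + 2*d :=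
    morseMu_le_add hD₂ hD₁ id monotone_id (fun x hx => hx) (fun x _ => hclose x) ht.1 hd
  have hA2 : morseMu (extIcc g₂) (-1) t ≤ morseMu (extIcc g₁) (-1) t + 2*d :=
    morseMu_le_add hD₁ hD₂ id monotone_id (fun x hx => hx) (fun x _ => hclose' x) ht.1 hd
  have hB1 : morseMu (extIcc g₁) t 1 ≤ morseMu (extIcc g₂) t 1 + 2*d :=
    morseMu_le_add hD₂ hD₁ id monotone_id (fun x hx => hx) (fun x _ => hclose x) ht.2 hd
  have hB2 : morseMu (extIcc g₂) t 1 ≤ morseMu (extIcc g₁) t 1 + 2*d :=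
    morseMu_le_add hD₁ hD₂ id monotone_id (fun x hx => hx) (fun x _ => hclose' x) ht.2 hd
  rw [abs_le]
  unfold bal
  constructor <;> linarith

end MorseAux

open MorseAux in
/-- For every embedding `g : [-1,1] → Y` into a metric space there is a unique
`t ∈ (-1,1)` with `μ(g([-1,t])) = μ(g([t,1]))`, and `t` depends continuously on `g`
in the compact-open topology on the space of embeddings. -/
theorem morseMu_balance_point {Y : Type*} [MetricSpace Y] :
    ∃ T : {g : C(Set.Icc (-1 : ℝ) 1, Y) // Function.Injective g} → ℝ,
      Continuous T ∧
      ∀ g : {g : C(Set.Icc (-1 : ℝ) 1, Y) // Function.Injective g},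
        (T g ∈ Set.Ioo (-1 : ℝ) 1 ∧
          morseMu (extIcc g.1) (-1) (T g) = morseMu (extIcc g.1) (T g) 1) ∧
        ∀ t ∈ Set.Ioo (-1 : ℝ) 1,
          morseMu (extIcc g.1) (-1) t = morseMu (extIcc g.1) t 1 → t = T g := by
  classical
  have H : ∀ g : {g : C(Set.Icc (-1 : ℝ) 1, Y) // Function.Injective g},
      ∃ t : ℝ, t ∈ Set.Ioo (-1:ℝ) 1 ∧ bal g.1 t = 0 := by
    intro g
    have hcont := bal_continuousOn g.1
    have h0 : (0:ℝ) ∈ Set.Ioo (bal g.1 (-1)) (bal g.1 1) :=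
      ⟨bal_neg_left g.2, bal_pos_right g.2⟩
    obtain ⟨t, ht, hbt⟩ := intermediate_value_Ioo (by norm_num : (-1:ℝ) ≤ 1) hcont h0
    exact ⟨t, ht, hbt⟩
  choose T hT using H
  have huniq : ∀ g, ∀ t ∈ Set.Ioo (-1:ℝ) 1, bal g.1 t = 0 → t = T g := by
    intro g t ht hbal
    obtain ⟨hTIoo, hTbal⟩ := hT g
    rcases lt_trichotomy t (T g) with h | h | h
    · have := bal_strictMono g.2 ht.1.le h hTIoo.2.le
      rw [hbal, hTbal] at this
      exact absurd this (lt_irrefl 0)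
    · exact h
    · have := bal_strictMono g.2 hTIoo.1.le h ht.2.le
      rw [hbal, hTbal] at this
      exact absurd this (lt_irrefl 0)
  refine ⟨T, ?_, fun g => ⟨⟨(hT g).1, sub_eq_zero.1 (hT g).2⟩,
    fun t ht heq => huniq g t ht (sub_eq_zero.2 heq)⟩⟩
  rw [Metric.continuous_iff]
  intro g₀ ε hε
  obtain ⟨ht₀Ioo, ht₀bal⟩ := hT g₀
  set t₀ := T g₀ with ht₀def
  set ε' := min (ε/2) (min ((1 - t₀)/2) ((t₀ + 1)/2)) with hε'def
  have hε'pos : 0 < ε' := lt_min (by linarith)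
    (lt_min (by linarith [ht₀Ioo.2]) (by linarith [ht₀Ioo.1]))
  have hε'le : ε' ≤ ε/2 := min_le_left _ _
  have hε'a : ε' ≤ (1 - t₀)/2 := le_trans (min_le_right _ _) (min_le_left _ _)
  have hε'b : ε' ≤ (t₀ + 1)/2 := le_trans (min_le_right _ _) (min_le_right _ _)
  have hlo : (-1:ℝ) < t₀ - ε' := by
    have := ht₀Ioo.1
    linarith
  have hhi : t₀ + ε' < 1 := by
    have := ht₀Ioo.2
    linarith
  have hmemlo : t₀ - ε' ∈ Set.Icc (-1:ℝ) 1 := ⟨hlo.le, by linarith [ht₀Ioo.2]⟩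
  have hmemhi : t₀ + ε' ∈ Set.Icc (-1:ℝ) 1 := ⟨by linarith [ht₀Ioo.1], hhi.le⟩
  have h1 : bal g₀.1 (t₀ - ε') < 0 := by
    have := bal_strictMono g₀.2 hmemlo.1 (by linarith : t₀ - ε' < t₀) ht₀Ioo.2.le
    rwa [ht₀bal] at this
  have h2 : 0 < bal g₀.1 (t₀ + ε') := by
    have := bal_strictMono g₀.2 ht₀Ioo.1.le (by linarith : t₀ < t₀ + ε') hmemhi.2
    rwa [ht₀bal] at this
  set δ := min (-(bal g₀.1 (t₀ - ε'))) (bal g₀.1 (t₀ + ε')) / 5 with hδdef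
  have hδpos : 0 < δ := by
    apply div_pos _ (by norm_num)
    exact lt_min (by linarith) h2
  refine ⟨δ, hδpos, fun g hg => ?_⟩
  have hgd : dist g.1 g₀.1 ≤ δ := by
    rw [← Subtype.dist_eq]
    exact hg.le
  have hc1 := bal_close g.1 g₀.1 hmemlo hδpos.le hgd
  have hc2 := bal_close g.1 g₀.1 hmemhi hδpos.le hgd
  rw [abs_le] at hc1 hc2
  have hmin1 : min (-(bal g₀.1 (t₀ - ε'))) (bal g₀.1 (t₀ + ε')) ≤ -(bal g₀.1 (t₀ - ε')) :=
    min_le_left _ _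
  have hmin2 : min (-(bal g₀.1 (t₀ - ε'))) (bal g₀.1 (t₀ + ε')) ≤ bal g₀.1 (t₀ + ε') :=
    min_le_right _ _
  have hδ1 : δ ≤ (-(bal g₀.1 (t₀ - ε')))/5 := by rw [hδdef]; linarith
  have hδ2 : δ ≤ (bal g₀.1 (t₀ + ε'))/5 := by rw [hδdef]; linarith
  have hblo : bal g.1 (t₀ - ε') < 0 := by linarith [hc1.2]
  have hbhi : 0 < bal g.1 (t₀ + ε') := by linarith [hc2.1]
  obtain ⟨hgIoo, hgbal⟩ := hT g
  have hgt : t₀ - ε' < T g := by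
    by_contra hcon
    push_neg at hcon
    rcases eq_or_lt_of_le hcon with he | hl
    · rw [he] at hgbal
      linarith
    · have := bal_strictMono g.2 hgIoo.1.le hl hmemlo.2
      rw [hgbal] at this
      linarith
  have hlt : T g < t₀ + ε' := by
    by_contra hcon
    push_neg at hcon
    rcases eq_or_lt_of_le hcon with he | hl
    · rw [← he] at hgbal
      linarith
    · have := bal_strictMono g.2 hmemhi.1 hl hgIoo.2.le
      rw [hgbal] at this
      linarith
  rw [Real.dist_eq]
  have : |T g - t₀| < ε' := abs_lt.2 ⟨by linarith, by linarith⟩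
  calc |T g - T g₀| = |T g - t₀| := by rw [ht₀def]
    _ < ε' := this
    _ < ε := by linarith
end

section
/- Let Q = [−∞,∞]^ℕ and fix n ≥ 1. For any neighborhoods U of [−n,n]^ℕ and V of 0 in Q, there exists a homeomorphism h : Q → Q such that h = id on Q ∖ U, h(Q ∖ s) = Q ∖ s where s = ℝ^ℕ ⊆ Q, h([−n,n]^ℕ) ⊆ V, and whenever h(x) = y then |y_i| ≤ |x_i| for each i ≥ 1. -/
/-!
By compactness, `U` contains the set of points whose first `m` coordinates lie in `[-c, c]`
for some `c > n`, and `V` contains the set of points whose first `m` coordinates lie in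
`[-ε, ε]`. On `[-∞, ∞]^m` shrink radially for the sup norm `N`: multiply all `m` coordinates by
`φ(N)/N`, where `φ` is piecewise linear with `φ(n) = min n ε` and `φ = id` on `[c, ∞]`. This is
the identity outside `[-c, c]^m`, multiplies by a positive factor `≤ 1` (so it keeps infinite
coordinates infinite and does not increase `|x_i|`), and its inverse is the radial map of
`φ⁻¹`, which has the same shape with the roles of `n` and `min n ε` exchanged.
-/

open Set Filter Topology

namespace HilbertCube

/-- `φ(t)/t`, with `t` clamped to `[a, c]`, for the piecewise linear `φ` through `(0,0)`, `(a,b)`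
and `(c,c)` that is the identity beyond `c`. -/
noncomputable def radialFactor (a b c t : ℝ) : ℝ :=
  (c - (c - b) / (c - a) * (c - max a (min c t))) / max a (min c t)

section radialFactor

variable {a b c t : ℝ}

lemma radialFactor_of_le (hac : a < c) (ht : t ≤ a) : radialFactor a b c t = b / a := by
  rw [radialFactor, max_eq_left ((min_le_right c t).trans ht),
    div_mul_cancel₀ _ (sub_ne_zero.2 hac.ne'), sub_sub_cancel]

lemma radialFactor_mul_of_mem (ha : 0 < a) (hat : a ≤ t) (htc : t ≤ c) :
    radialFactor a b c t * t = c - (c - b) / (c - a) * (c - t) := by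
  rw [radialFactor, min_eq_right htc, max_eq_right hat, div_mul_cancel₀ _ (by linarith)]

lemma radialFactor_of_ge (ha : 0 < a) (hac : a < c) (ht : c ≤ t) : radialFactor a b c t = 1 := by
  rw [radialFactor, min_eq_left ht, max_eq_right hac.le, sub_self, mul_zero, sub_zero,
    div_self (ha.trans hac).ne']

lemma continuous_radialFactor (ha : 0 < a) : Continuous (radialFactor a b c) := by
  have hu : Continuous fun t => max a (min c t) :=
    continuous_const.max (continuous_const.min continuous_id)
  exact (continuous_const.sub (continuous_const.mul (continuous_const.sub hu))).div hu
    fun t => (ha.trans_le (le_max_left _ _)).ne'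

lemma radialFactor_pos (ha : 0 < a) (hb : 0 < b) (hac : a < c) (hbc : b < c) :
    0 < radialFactor a b c t := by
  have hau : a ≤ max a (min c t) := le_max_left _ _
  have huc : max a (min c t) ≤ c := max_le hac.le (min_le_left _ _)
  have : (c - b) / (c - a) * (c - max a (min c t)) ≤ c - b := by
    rw [div_mul_eq_mul_div, div_le_iff₀ (by linarith)]; nlinarith
  exact div_pos (by linarith) (by linarith)

lemma radialFactor_le_one (ha : 0 < a) (hba : b ≤ a) (hac : a < c) : radialFactor a b c t ≤ 1 := by
  have hau : a ≤ max a (min c t) := le_max_left _ _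
  have huc : max a (min c t) ≤ c := max_le hac.le (min_le_left _ _)
  have : c - max a (min c t) ≤ (c - b) / (c - a) * (c - max a (min c t)) :=
    le_mul_of_one_le_left (by linarith) ((one_le_div (by linarith)).2 (by linarith))
  rw [radialFactor, div_le_one (by linarith)]
  linarith

lemma radialFactor_mul_le (ha : 0 < a) (hb : 0 < b) (hac : a < c) (hbc : b < c)
    (htc : t ≤ c) : radialFactor a b c t * t ≤ c := by
  rcases le_total t a with hta | hat
  · rw [radialFactor_of_le hac hta, div_mul_eq_mul_div, div_le_iff₀ ha]
    nlinarith
  · rw [radialFactor_mul_of_mem ha hat htc]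
    have := div_nonneg (sub_nonneg.2 hbc.le) (sub_nonneg.2 hac.le)
    nlinarith

lemma radialFactor_swap_mul (ha : 0 < a) (hb : 0 < b) (hac : a < c) (hbc : b < c)
    (htc : t ≤ c) :
    radialFactor b a c (radialFactor a b c t * t) * radialFactor a b c t = 1 := by
  rcases le_total t a with hta | hat
  · have hs : b / a * t ≤ b := by rw [div_mul_eq_mul_div, div_le_iff₀ ha]; nlinarith
    rw [radialFactor_of_le hac hta, radialFactor_of_le hbc hs]
    field_simp
  · set p := radialFactor a b c t * t with hp
    have hpc : p ≤ c := radialFactor_mul_le ha hb hac hbc htc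
    have hbp : b ≤ p := by
      have : (c - b) / (c - a) * (c - t) ≤ c - b := by
        rw [div_mul_eq_mul_div, div_le_iff₀ (by linarith)]; nlinarith
      rw [hp, radialFactor_mul_of_mem ha hat htc]
      linarith
    have hinv : radialFactor b a c p * p = t := by
      have hca : c - a ≠ 0 := sub_ne_zero.2 hac.ne'
      have hcb : c - b ≠ 0 := sub_ne_zero.2 hbc.ne'
      rw [radialFactor_mul_of_mem hb hbp hpc, hp, radialFactor_mul_of_mem ha hat htc]
      field_simp
      ring
    apply mul_right_cancel₀ (ha.trans_le hat).ne'
    rw [mul_assoc, ← hp, hinv, one_mul]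

end radialFactor

noncomputable def truncate (c : ℝ) (y : EReal) : ℝ :=
  (max ((-c : ℝ) : EReal) (min (c : EReal) y)).toReal

section truncate

variable {c : ℝ} {y : EReal}

lemma coe_truncate (c : ℝ) (y : EReal) :
    (truncate c y : EReal) = max ((-c : ℝ) : EReal) (min (c : EReal) y) := by
  refine EReal.coe_toReal (ne_of_lt ?_) (ne_of_gt ((EReal.bot_lt_coe _).trans_le (le_max_left _ _)))
  exact max_lt (EReal.coe_lt_top _) ((min_le_left _ _).trans_lt (EReal.coe_lt_top _))

lemma continuous_truncate : Continuous (truncate c) := by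
  rw [EReal.isEmbedding_coe.continuous_iff]
  simpa only [Function.comp_def, coe_truncate, id] using
    continuous_const.max (continuous_const.min (continuous_id (X := EReal)))

lemma coe_truncate_of_mem (hy : y ∈ Icc ((-c : ℝ) : EReal) c) : (truncate c y : EReal) = y := by
  rw [coe_truncate, min_eq_right hy.2, max_eq_right hy.1]

lemma truncate_coe {r : ℝ} (hr : |r| ≤ c) : truncate c r = r := by
  obtain ⟨h₁, h₂⟩ := abs_le.1 hr
  exact_mod_cast coe_truncate_of_mem (c := c) (y := r) ⟨by exact_mod_cast h₁, by exact_mod_cast h₂⟩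

lemma abs_truncate_le (hc : 0 ≤ c) (y : EReal) : |truncate c y| ≤ c := by
  have h₁ : ((-c : ℝ) : EReal) ≤ truncate c y := coe_truncate c y ▸ le_max_left _ _
  have h₂ : (truncate c y : EReal) ≤ c := by
    rw [coe_truncate]
    exact max_le (EReal.coe_le_coe_iff.2 (by linarith)) (min_le_left _ _)
  exact abs_le.2 ⟨by exact_mod_cast h₁, by exact_mod_cast h₂⟩

lemma abs_truncate_of_notMem (hc : 0 ≤ c) (hy : y ∉ Icc ((-c : ℝ) : EReal) c) :
    |truncate c y| = c := by
  have hcc : ((-c : ℝ) : EReal) ≤ c := EReal.coe_le_coe_iff.2 (by linarith)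
  rcases not_and_or.1 hy with hy | hy <;> rw [not_le] at hy
  · have : truncate c y = -c := by
      have h := coe_truncate c y
      rw [min_eq_right (hy.le.trans hcc), max_eq_left hy.le] at h
      exact_mod_cast h
    rw [this, abs_neg, abs_of_nonneg hc]
  · have : truncate c y = c := by
      have h := coe_truncate c y
      rw [min_eq_left hy.le, max_eq_right hcc] at h
      exact_mod_cast h
    rw [this, abs_of_nonneg hc]

end truncate

variable {ι : Type*}

/-- Clamping keeps this real-valued and continuous; only its values in `[0, c]` matter to
`radialFactor`. -/
noncomputable def truncSupNorm (c : ℝ) (s : Finset ι) (x : ι → EReal) : ℝ :=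
  ((s.sup fun i => ‖truncate c (x i)‖₊ : NNReal) : ℝ)

noncomputable def scaleOn [DecidableEq ι] (s : Finset ι) (σ : ℝ) (x : ι → EReal) : ι → EReal :=
  fun i => if i ∈ s then (σ : EReal) * x i else x i

def finiteCube (s : Finset ι) (r : ℝ) : Set (ι → EReal) :=
  {x | ∀ i ∈ s, x i ∈ Icc ((-r : ℝ) : EReal) r}

lemma finiteCube_mono {s t : Finset ι} {r r' : ℝ} (hst : s ⊆ t) (hr : r ≤ r') :
    finiteCube t r ⊆ finiteCube s r' := fun _ hx i hi =>
  Icc_subset_Icc (EReal.coe_le_coe_iff.2 (neg_le_neg hr)) (EReal.coe_le_coe_iff.2 hr)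
    (hx i (hst hi))

lemma isClosed_finiteCube (s : Finset ι) (r : ℝ) : IsClosed (finiteCube s r) :=
  isClosed_set_pi fun _ _ => isClosed_Icc

section truncSupNorm

variable {c : ℝ} {s : Finset ι} {x : ι → EReal}

lemma continuous_truncSupNorm : Continuous (truncSupNorm c s) :=
  NNReal.continuous_coe.comp <| Continuous.finset_sup_apply fun i _ =>
    continuous_nnnorm.comp (continuous_truncate.comp (continuous_apply i))

lemma truncSupNorm_le (hc : 0 ≤ c) : truncSupNorm c s x ≤ c :=
  (NNReal.coe_le_coe (r₂ := ⟨c, hc⟩)).2 (Finset.sup_le fun i _ => abs_truncate_le hc (x i))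

lemma abs_truncate_le_truncSupNorm {i : ι} (hi : i ∈ s) : |truncate c (x i)| ≤ truncSupNorm c s x :=
  NNReal.coe_le_coe.2 (Finset.le_sup (f := fun i => ‖truncate c (x i)‖₊) hi)

lemma truncSupNorm_eq_of_notMem (hc : 0 ≤ c) (hx : x ∉ finiteCube s c) :
    truncSupNorm c s x = c := by
  simp only [finiteCube, mem_ofPred_eq, not_forall] at hx
  obtain ⟨i, hi, hxi⟩ := hx
  exact (truncSupNorm_le hc).antisymm
    ((abs_truncate_of_notMem hc hxi).symm.le.trans (abs_truncate_le_truncSupNorm hi))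

lemma truncSupNorm_le_of_mem_finiteCube {r : ℝ} (hr : 0 ≤ r) (hrc : r ≤ c)
    (hx : x ∈ finiteCube s r) : truncSupNorm c s x ≤ r := by
  refine (NNReal.coe_le_coe (r₂ := ⟨r, hr⟩)).2 (Finset.sup_le fun i hi => ?_)
  obtain ⟨h₁, h₂⟩ := hx i hi
  rw [← coe_truncate_of_mem (finiteCube_mono subset_rfl hrc hx i hi)] at h₁ h₂
  exact abs_le.2 ⟨by exact_mod_cast h₁, by exact_mod_cast h₂⟩

lemma truncSupNorm_scaleOn [DecidableEq ι] {σ : ℝ} (hσ : 0 ≤ σ) (hx : x ∈ finiteCube s c)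
    (hσc : σ * truncSupNorm c s x ≤ c) :
    truncSupNorm c s (scaleOn s σ x) = σ * truncSupNorm c s x := by
  have hcoord : ∀ i ∈ s, ‖truncate c (scaleOn s σ x i)‖₊ = ‖σ‖₊ * ‖truncate c (x i)‖₊ := by
    intro i hi
    have hle : |σ * truncate c (x i)| ≤ c := by
      rw [abs_mul, abs_of_nonneg hσ]
      exact (mul_le_mul_of_nonneg_left (abs_truncate_le_truncSupNorm hi) hσ).trans hσc
    rw [scaleOn, if_pos hi]
    conv_lhs => rw [← coe_truncate_of_mem (hx i hi), ← EReal.coe_mul, truncate_coe hle, nnnorm_mul]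
  rw [truncSupNorm, Finset.sup_congr rfl hcoord, ← NNReal.mul_finset_sup, NNReal.coe_mul,
    coe_nnnorm, Real.norm_of_nonneg hσ, truncSupNorm]

end truncSupNorm

section scaleOn

variable [DecidableEq ι] {s : Finset ι} {x : ι → EReal}

@[simp] lemma scaleOn_one : scaleOn s 1 x = x := by
  funext i; by_cases hi : i ∈ s <;> simp [scaleOn, hi]

lemma scaleOn_scaleOn (σ τ : ℝ) : scaleOn s σ (scaleOn s τ x) = scaleOn s (σ * τ) x := by
  funext i; by_cases hi : i ∈ s <;> simp [scaleOn, hi, EReal.coe_mul, mul_assoc]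

lemma continuous_scaleOn {X : Type*} [TopologicalSpace X] {σ : X → ℝ} {f : X → ι → EReal}
    (hσ : Continuous σ) (hσ0 : ∀ p, 0 < σ p) (hf : Continuous f) :
    Continuous fun p => scaleOn s (σ p) (f p) := by
  refine continuous_pi fun i => ?_
  by_cases hi : i ∈ s
  · simp only [scaleOn, if_pos hi]
    refine continuous_iff_continuousAt.2 fun p => ?_
    have hne : ((σ p : ℝ) : EReal) ≠ 0 := EReal.coe_ne_zero.2 (hσ0 p).ne'
    exact (EReal.continuousAt_mul (Or.inl hne) (Or.inl hne) (Or.inl (EReal.coe_ne_bot _))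
      (Or.inl (EReal.coe_ne_top _))).comp
      ((continuous_coe_real_ereal.comp hσ).prodMk ((continuous_apply i).comp hf)).continuousAt
  · simp only [scaleOn, if_neg hi]
    exact (continuous_apply i).comp hf

lemma scaleOn_apply_eq_top_iff {σ : ℝ} (hσ : 0 < σ) (i : ι) : scaleOn s σ x i = ⊤ ↔ x i = ⊤ := by
  by_cases hi : i ∈ s
  · rw [scaleOn, if_pos hi, EReal.mul_eq_top]
    simp [hσ, EReal.coe_ne_bot, EReal.coe_ne_top, not_lt.2 hσ.le]
  · rw [scaleOn, if_neg hi]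

lemma scaleOn_apply_eq_bot_iff {σ : ℝ} (hσ : 0 < σ) (i : ι) : scaleOn s σ x i = ⊥ ↔ x i = ⊥ := by
  by_cases hi : i ∈ s
  · rw [scaleOn, if_pos hi, EReal.mul_eq_bot]
    simp [hσ, EReal.coe_ne_bot, EReal.coe_ne_top, not_lt.2 hσ.le]
  · rw [scaleOn, if_neg hi]

lemma abs_scaleOn_apply_le {σ : ℝ} (hσ0 : 0 ≤ σ) (hσ1 : σ ≤ 1) (i : ι) :
    (scaleOn s σ x i).abs ≤ (x i).abs := by
  by_cases hi : i ∈ s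
  · rw [scaleOn, if_pos hi, EReal.abs_mul, EReal.abs_def, abs_of_nonneg hσ0]
    exact mul_le_of_le_one_left zero_le (ENNReal.ofReal_le_one.2 hσ1)
  · rw [scaleOn, if_neg hi]

lemma scaleOn_mem_finiteCube {σ r : ℝ} (hσ : 0 ≤ σ) (hx : x ∈ finiteCube s r) :
    scaleOn s σ x ∈ finiteCube s (σ * r) := by
  intro i hi
  obtain ⟨h₁, h₂⟩ := hx i hi
  have hxi : ((x i).toReal : EReal) = x i := EReal.coe_toReal
    (h₂.trans_lt (EReal.coe_lt_top r)).ne ((EReal.bot_lt_coe _).trans_le h₁).ne'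
  rw [← hxi] at h₁ h₂
  rw [scaleOn, if_pos hi, ← hxi, ← EReal.coe_mul]
  have h₁' : -r ≤ (x i).toReal := by exact_mod_cast h₁
  have h₂' : (x i).toReal ≤ r := by exact_mod_cast h₂
  constructor
  · exact EReal.coe_le_coe_iff.2 (by nlinarith)
  · exact EReal.coe_le_coe_iff.2 (by nlinarith)

end scaleOn

noncomputable def radialShrink [DecidableEq ι] (a b c : ℝ) (s : Finset ι) (x : ι → EReal) :
    ι → EReal :=
  scaleOn s (radialFactor a b c (truncSupNorm c s x)) x

section radialShrink

variable [DecidableEq ι] {a b c : ℝ} {s : Finset ι} {x : ι → EReal}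

lemma radialShrink_of_notMem (ha : 0 < a) (hac : a < c) (hx : x ∉ finiteCube s c) :
    radialShrink a b c s x = x := by
  rw [radialShrink, truncSupNorm_eq_of_notMem (by linarith) hx, radialFactor_of_ge ha hac le_rfl,
    scaleOn_one]

variable (ha : 0 < a) (hb : 0 < b) (hac : a < c) (hbc : b < c)
include ha hb hac hbc

lemma truncSupNorm_radialShrink :
    truncSupNorm c s (radialShrink a b c s x) =
      radialFactor a b c (truncSupNorm c s x) * truncSupNorm c s x := by
  by_cases hx : x ∈ finiteCube s c
  · exact truncSupNorm_scaleOn (radialFactor_pos ha hb hac hbc).le hx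
      (radialFactor_mul_le ha hb hac hbc (truncSupNorm_le (by linarith)))
  · rw [radialShrink_of_notMem ha hac hx, truncSupNorm_eq_of_notMem (by linarith) hx,
      radialFactor_of_ge ha hac le_rfl, one_mul]

lemma radialShrink_radialShrink : radialShrink b a c s (radialShrink a b c s x) = x := by
  conv_lhs => rw [radialShrink, truncSupNorm_radialShrink ha hb hac hbc]
  rw [radialShrink, scaleOn_scaleOn,
    radialFactor_swap_mul ha hb hac hbc (truncSupNorm_le (by linarith)), scaleOn_one]

lemma continuous_radialShrink : Continuous (radialShrink a b c s) :=
  continuous_scaleOn ((continuous_radialFactor ha).comp continuous_truncSupNorm)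
    (fun _ => radialFactor_pos ha hb hac hbc) continuous_id

lemma radialShrink_apply_eq_top_iff (i : ι) : radialShrink a b c s x i = ⊤ ↔ x i = ⊤ :=
  scaleOn_apply_eq_top_iff (radialFactor_pos ha hb hac hbc) i

lemma radialShrink_apply_eq_bot_iff (i : ι) : radialShrink a b c s x i = ⊥ ↔ x i = ⊥ :=
  scaleOn_apply_eq_bot_iff (radialFactor_pos ha hb hac hbc) i

omit hbc in
lemma radialShrink_mem_finiteCube (hx : x ∈ finiteCube s a) :
    radialShrink a b c s x ∈ finiteCube s b := by
  have hN := truncSupNorm_le_of_mem_finiteCube ha.le hac.le hx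
  have := scaleOn_mem_finiteCube (σ := b / a) (div_pos hb ha).le hx
  rwa [div_mul_cancel₀ _ ha.ne', ← radialFactor_of_le hac hN] at this

omit hbc in
lemma abs_radialShrink_apply_le (hba : b ≤ a) (i : ι) :
    (radialShrink a b c s x i).abs ≤ (x i).abs :=
  abs_scaleOn_apply_le (radialFactor_pos ha hb hac (hba.trans_lt hac)).le
    (radialFactor_le_one ha hba hac) i

end radialShrink

noncomputable def radialShrinkHomeomorph [DecidableEq ι] (s : Finset ι) {a b c : ℝ} (ha : 0 < a)
    (hb : 0 < b) (hac : a < c) (hbc : b < c) : (ι → EReal) ≃ₜ (ι → EReal) where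
  toFun := radialShrink a b c s
  invFun := radialShrink b a c s
  left_inv _ := radialShrink_radialShrink ha hb hac hbc
  right_inv _ := radialShrink_radialShrink hb ha hbc hac
  continuous_toFun := continuous_radialShrink ha hb hac hbc
  continuous_invFun := continuous_radialShrink hb ha hbc hac

lemma coe_radialShrinkHomeomorph [DecidableEq ι] (s : Finset ι) {a b c : ℝ} (ha : 0 < a)
    (hb : 0 < b) (hac : a < c) (hbc : b < c) :
    ⇑(radialShrinkHomeomorph s ha hb hac hbc) = radialShrink a b c s := rfl

lemma exists_finiteCube_subset {r : ℝ} {U : Set (ℕ → EReal)}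
    (hU : ∀ x : ℕ → EReal, (∀ i, x i ∈ Icc ((-r : ℝ) : EReal) r) → U ∈ 𝓝 x) :
    ∃ m, ∃ c > r, finiteCube (Finset.range m) c ⊆ U := by
  set V : ℕ → Set (ℕ → EReal) := fun k => finiteCube (Finset.range k) (r + 1 / (k + 1))
  have hV : Antitone V := fun k l hkl =>
    finiteCube_mono (Finset.range_mono hkl) (by gcongr)
  have hlim : Tendsto (fun k : ℕ => r + 1 / ((k : ℝ) + 1)) atTop (𝓝 r) := by
    simpa using tendsto_one_div_add_atTop_nhds_zero_nat.const_add r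
  have hV_iInter : ∀ x ∈ ⋂ k, V k, ∀ i, x i ∈ Icc ((-r : ℝ) : EReal) r := fun x hx i => by
    have hev : ∀ᶠ k : ℕ in atTop,
        x i ∈ Icc ((-(r + 1 / ((k : ℝ) + 1)) : ℝ) : EReal) (r + 1 / ((k : ℝ) + 1) : ℝ) :=
      (eventually_gt_atTop i).mono fun k hk => mem_iInter.1 hx k i (Finset.mem_range.2 hk)
    exact ⟨le_of_tendsto ((continuous_coe_real_ereal.tendsto _).comp hlim.neg)
        (hev.mono fun _ h => h.1),
      ge_of_tendsto ((continuous_coe_real_ereal.tendsto _).comp hlim) (hev.mono fun _ h => h.2)⟩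
  obtain ⟨k, hk⟩ := exists_subset_nhds_of_isCompact' hV.directed_ge
    (fun _ => (isClosed_finiteCube _ _).isCompact) (fun _ => isClosed_finiteCube _ _)
    (fun x hx => hU x (hV_iInter x hx))
  exact ⟨k, r + 1 / (k + 1), lt_add_of_pos_right r Nat.one_div_pos_of_nat, hk⟩

end HilbertCube

open HilbertCube in
/-- In the Hilbert cube `Q = [−∞,∞]^ℕ`, for `n ≥ 1` and any neighborhoods `U` of
`[−n,n]^ℕ` and `V` of `0`, there is a homeomorphism `h : Q → Q` with `h = id` outside
`U`, `h(Q ∖ s) = Q ∖ s` (where `s = ℝ^ℕ ⊆ Q`), `h([−n,n]^ℕ) ⊆ V`, and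
`|h(x)_i| ≤ |x_i|` for all `i`. -/
theorem hilbertCube_shrinking (n : ℕ) (hn : 1 ≤ n)
    (U V : Set (ℕ → EReal)) (hUo : IsOpen U) (hVo : IsOpen V)
    (hU : {x : ℕ → EReal | ∀ i, x i ∈ Set.Icc ((-(n : ℝ) : ℝ) : EReal) ((n : ℝ) : EReal)} ⊆ U)
    (hV : (fun _ => (0 : EReal)) ∈ V) :
    ∃ h : (ℕ → EReal) ≃ₜ (ℕ → EReal),
      (∀ x, x ∉ U → h x = x) ∧
      (h '' {x | ∃ i, x i = ⊤ ∨ x i = ⊥} = {x | ∃ i, x i = ⊤ ∨ x i = ⊥}) ∧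
      (h '' {x : ℕ → EReal | ∀ i, x i ∈ Set.Icc ((-(n : ℝ) : ℝ) : EReal) ((n : ℝ) : EReal)} ⊆ V) ∧
      (∀ x i, (h x i).abs ≤ (x i).abs) := by
  have hn0 : (0 : ℝ) < n := by exact_mod_cast hn
  obtain ⟨m₁, c, hnc, hcU⟩ := exists_finiteCube_subset fun x hx => hUo.mem_nhds (hU hx)
  obtain ⟨m₂, ε, hε, hεV⟩ := exists_finiteCube_subset (r := 0) fun x hx => by
    obtain rfl : x = fun _ => 0 := funext fun i => by simpa using hx i
    exact hVo.mem_nhds hV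
  have hb : 0 < min (n : ℝ) ε := lt_min hn0 hε
  have hbc : min (n : ℝ) ε < c := (min_le_left _ _).trans_lt hnc
  set h := radialShrinkHomeomorph (Finset.range (max m₁ m₂)) hn0 hb hnc hbc
  refine ⟨h, fun x hx => ?_, ?_, ?_, fun x i => ?_⟩
  · exact radialShrink_of_notMem hn0 hnc fun hx' =>
      hx (hcU (finiteCube_mono (Finset.range_mono (le_max_left _ _)) le_rfl hx'))
  · refine ((h.toEquiv.preimage_eq_iff_eq_image _ _).1 (Set.ext fun x => ?_)).symm
    simp only [mem_preimage, mem_ofPred_eq, Homeomorph.coe_toEquiv, h, coe_radialShrinkHomeomorph,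
      radialShrink_apply_eq_top_iff hn0 hb hnc hbc, radialShrink_apply_eq_bot_iff hn0 hb hnc hbc]
  · rintro _ ⟨x, hx, rfl⟩
    exact hεV (finiteCube_mono (Finset.range_mono (le_max_right _ _)) (min_le_right _ _)
      (radialShrink_mem_finiteCube hn0 hb hnc fun i _ => hx i))
  · exact abs_radialShrink_apply_le hn0 hb hnc (min_le_left _ _) i
end

section
/- Let X be a completely metrizable separable space and X₂ ⊆ X a σ-compact subset. Then there exists a closed embedding f : X → ℝ^ℕ (product topology) such that f(X₂) ⊆ Σ, where Σ = {x : sup_n|x_n| < ∞} is the set of bounded sequences. -/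
/-!
Fix a complete metric on `X` and a dense sequence `u`. The truncated distances
`h x = (min (dist x (u k)) 1)ₖ` define a continuous injection of `X` into `[0,1]^ℕ` whose values
all have infimum `0`. By completeness, a sequence `xᵢ` with `h xᵢ → a` converges unless `a` lies in
one of the closed sets `Fₙ = {a | ∀ k, 1/(n+1) ≤ a k}`, which miss the range of `h`. Adjoining
coordinates `gₙ` that blow up near `Fₙ` makes `x ↦ (h x, g x)` a closed embedding. Writing `X₂` as
an increasing union of compact sets `Kₙ`, each `gₙ` can be scaled to be at most `1` on `Kₙ`, so on
`Kₘ` all but finitely many of the `gₙ` are bounded by `1`.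
-/

open Filter Set Topology Metric TopologicalSpace

section ClosedEmbedding

variable {X Y Z : Type*} [TopologicalSpace X] [TopologicalSpace Y] [TopologicalSpace Z]

theorem isClosedEmbedding_of_exists_tendsto [SequentialSpace Z] [T2Space Z] {f : X → Z}
    (hf : Continuous f) (hinj : Function.Injective f)
    (hlim : ∀ (x : ℕ → X) (z : Z), Tendsto (f ∘ x) atTop (𝓝 z) → ∃ a, Tendsto x atTop (𝓝 a)) :
    IsClosedEmbedding f := by
  refine .of_continuous_injective_isClosedMap hf hinj fun C hC => IsSeqClosed.isClosed ?_
  intro fx z hfxC hz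
  choose x hxC hfx using hfxC
  obtain rfl : f ∘ x = fx := funext hfx
  obtain ⟨a, ha⟩ := hlim x z hz
  exact ⟨a, hC.mem_of_tendsto ha (.of_forall hxC),
    tendsto_nhds_unique ((hf.tendsto a).comp ha) hz⟩

theorem exists_continuous_tendsto_atTop_of_isClosed [PerfectlyNormalSpace Y] {e : X → Y}
    (he : Continuous e) {F : Set Y} (hF : IsClosed F) (hdisj : ∀ x, e x ∉ F) {K : Set X}
    (hK : IsCompact K) :
    ∃ g : X → ℝ, Continuous g ∧ (∀ x ∈ K, |g x| ≤ 1) ∧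
      ∀ (x : ℕ → X) (y : Y), y ∈ F → Tendsto (e ∘ x) atTop (𝓝 y) →
        Tendsto (g ∘ x) atTop atTop := by
  obtain ⟨φ, rfl, hφ⟩ := perfectlyNormalSpace_iff_forall_isClosed_preimage_zero.1 ‹_› F hF
  have hpos : ∀ x, 0 < φ (e x) := fun x => (hφ _).1.lt_of_ne' (hdisj x)
  obtain ⟨δ, hδ, hδK⟩ :=
    hK.exists_forall_le' (φ.continuous.comp he).continuousOn fun x _ => hpos x
  refine ⟨fun x => δ / φ (e x), continuous_const.div (φ.continuous.comp he) fun x => (hpos x).ne',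
    fun x hx => ?_, fun x y hy hx => ?_⟩
  · rw [abs_of_pos (div_pos hδ (hpos x))]
    exact div_le_one_of_le₀ (hδK x hx) (hpos x).le
  · have hφx : Tendsto (φ ∘ e ∘ x) atTop (𝓝[>] 0) := by
      refine tendsto_nhdsWithin_iff.2 ⟨?_, .of_forall fun i => hpos (x i)⟩
      simpa [show φ y = 0 from hy] using (φ.continuous.tendsto y).comp hx
    exact (hφx.inv_tendsto_nhdsGT_zero.const_mul_atTop hδ).congr fun i =>
      (div_eq_mul_inv _ _).symm

theorem isClosedEmbedding_prodMk_of_tendsto_atTop [MetrizableSpace Y] {e : X → Y}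
    (he : Continuous e) (hinj : Function.Injective e) {F : ℕ → Set Y}
    (hlim : ∀ (x : ℕ → X) (y : Y), Tendsto (e ∘ x) atTop (𝓝 y) → (∀ n, y ∉ F n) →
      ∃ a, Tendsto x atTop (𝓝 a))
    {g : ℕ → X → ℝ} (hg : ∀ n, Continuous (g n))
    (hgF : ∀ n (x : ℕ → X) (y : Y), y ∈ F n → Tendsto (e ∘ x) atTop (𝓝 y) →
      Tendsto (g n ∘ x) atTop atTop) :
    IsClosedEmbedding fun x => (e x, fun n => g n x) := by
  refine isClosedEmbedding_of_exists_tendsto (he.prodMk (continuous_pi hg))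
    (fun x x' h => hinj (congrArg Prod.fst h)) fun x ⟨y, w⟩ hx => ?_
  have hex : Tendsto (e ∘ x) atTop (𝓝 y) := (continuous_fst.tendsto _).comp hx
  refine hlim x y hex fun n hy => not_tendsto_nhds_of_tendsto_atTop (hgF n x y hy hex) (w n) ?_
  exact ((continuous_apply n).comp continuous_snd).tendsto _ |>.comp hx

end ClosedEmbedding

theorem exists_forall_abs_le_of_mem_iUnion {X : Type*} {K : ℕ → Set X} (hK : Monotone K)
    {g : ℕ → X → ℝ} (hgK : ∀ n, ∀ x ∈ K n, |g n x| ≤ 1) {x : X} (hx : x ∈ ⋃ n, K n) :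
    ∃ C, ∀ n, |g n x| ≤ C := by
  obtain ⟨m, hm⟩ := mem_iUnion.1 hx
  refine ⟨1 + ∑ n ∈ Finset.range m, |g n x|, fun n => ?_⟩
  have hsum : 0 ≤ ∑ n ∈ Finset.range m, |g n x| := Finset.sum_nonneg fun n _ => abs_nonneg _
  rcases lt_or_ge n m with hn | hn
  · have := Finset.single_le_sum (fun n _ => abs_nonneg (g n x)) (Finset.mem_range.2 hn)
    linarith
  · linarith [hgK n x (hK hn hm)]

theorem exists_homeomorph_prod_pi_nat (R : Type*) [TopologicalSpace R] :
    ∃ Φ : (ℕ → R) × (ℕ → R) ≃ₜ (ℕ → R), ∀ p m, Φ p m ∈ range p.1 ∪ range p.2 := by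
  refine ⟨Homeomorph.sumArrowHomeomorphProdArrow.symm.trans
    (Homeomorph.piCongrLeft (Y := fun _ => R) Equiv.natSumNatEquivNat.symm).symm, fun p m => ?_⟩
  change Sum.elim p.1 p.2 (Equiv.natSumNatEquivNat.symm m) ∈ _
  rcases Equiv.natSumNatEquivNat.symm m with k | k
  exacts [.inl ⟨k, rfl⟩, .inr ⟨k, rfl⟩]

section TruncDist

variable {X : Type*} [MetricSpace X] {u : ℕ → X}

def truncDist (u : ℕ → X) (x : X) (k : ℕ) : ℝ := min (dist x (u k)) 1

theorem continuous_truncDist (u : ℕ → X) : Continuous (truncDist u) :=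
  continuous_pi fun _ => (continuous_id.dist continuous_const).min continuous_const

theorem abs_truncDist_le_one (x : X) (k : ℕ) : |truncDist u x k| ≤ 1 :=
  (abs_of_nonneg (le_min dist_nonneg zero_le_one)).trans_le (min_le_right _ _)

theorem dist_lt_of_truncDist_lt {x y : X} {k : ℕ} {r : ℝ} (hr : r ≤ 1)
    (hx : truncDist u x k < r) (hy : truncDist u y k < r) : dist x y < 2 * r := by
  have hx' : dist x (u k) < r := (min_lt_iff.1 hx).resolve_right hr.not_gt
  have hy' : dist y (u k) < r := (min_lt_iff.1 hy).resolve_right hr.not_gt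
  linarith [dist_triangle_right x y (u k)]

theorem exists_truncDist_lt (hu : DenseRange u) (x : X) {r : ℝ} (hr : 0 < r) :
    ∃ k, truncDist u x k < r :=
  (denseRange_iff.1 hu x r hr).imp fun _ hk => (min_le_left _ _).trans_lt hk

theorem truncDist_injective (hu : DenseRange u) : Function.Injective (truncDist u) := by
  intro x y hxy
  by_contra hne
  have hd : 0 < dist x y := dist_pos.2 hne
  obtain ⟨k, hk⟩ := exists_truncDist_lt hu x (r := min (dist x y / 2) 1) (by positivity)
  have := dist_lt_of_truncDist_lt (min_le_right _ _) hk (hxy ▸ hk)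
  linarith [min_le_left (dist x y / 2) 1]

theorem truncDist_notMem_Ici (hu : DenseRange u) (x : X) {ε : ℝ} (hε : 0 < ε) :
    truncDist u x ∉ Ici fun _ => ε := fun hx =>
  let ⟨k, hk⟩ := exists_truncDist_lt hu x hε
  (hx k).not_gt hk

theorem cauchySeq_of_tendsto_truncDist {x : ℕ → X} {a : ℕ → ℝ}
    (hx : Tendsto (truncDist u ∘ x) atTop (𝓝 a))
    (ha : ∀ n : ℕ, a ∉ Ici fun _ => (1 / (n + 1) : ℝ)) :
    CauchySeq x := by
  refine Metric.cauchySeq_iff'.2 fun ε hε => ?_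
  set r := min (ε / 2) 1
  have hr : 0 < r := by positivity
  obtain ⟨n, hn⟩ := exists_nat_one_div_lt hr
  obtain ⟨k, hk⟩ : ∃ k, a k < r := by
    have := ha n
    simp only [mem_Ici, Pi.le_def, not_forall, not_le] at this
    exact this.imp fun k hk => hk.trans hn
  have hxk : Tendsto (fun i => truncDist u (x i) k) atTop (𝓝 (a k)) :=
    ((continuous_apply k).tendsto a).comp hx
  obtain ⟨N, hN⟩ := eventually_atTop.1 (hxk.eventually_lt_const hk)
  refine ⟨N, fun i hi => ?_⟩
  have := dist_lt_of_truncDist_lt (min_le_right _ _) (hN i hi) (hN N le_rfl)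
  linarith [min_le_left (ε / 2) 1]

end TruncDist

/-- Every completely metrizable separable (i.e. Polish) space `X` admits a closed
embedding `f : X → ℝ^ℕ` (product topology) such that a prescribed σ-compact subset
`X₂ ⊆ X` is mapped into the set `Σ` of bounded sequences. -/
theorem closedEmbedding_into_s_with_sigmaCompact_in_Sigma
    {X : Type*} [TopologicalSpace X] [PolishSpace X]
    (X₂ : Set X) (hX₂ : IsSigmaCompact X₂) :
    ∃ f : X → (ℕ → ℝ), Topology.IsClosedEmbedding f ∧
      f '' X₂ ⊆ {x : ℕ → ℝ | ∃ C : ℝ, ∀ n, |x n| ≤ C} := by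
  rcases isEmpty_or_nonempty X with hX | hX
  · exact ⟨isEmptyElim, isClosedEmbedding_of_exists_tendsto continuous_of_discreteTopology
      (fun x => isEmptyElim x) fun x _ _ => isEmptyElim (x 0), by simp⟩
  let := TopologicalSpace.upgradeIsCompletelyMetrizable X
  obtain ⟨u, hu⟩ := TopologicalSpace.exists_dense_seq X
  obtain ⟨K, hK, rfl⟩ := hX₂
  choose g hg hgK hgF using fun n : ℕ =>
    exists_continuous_tendsto_atTop_of_isClosed (continuous_truncDist u) isClosed_Ici
      (fun x => truncDist_notMem_Ici hu x (ε := 1 / (n + 1)) (by positivity))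
      (isCompact_accumulate hK n)
  have hemb := isClosedEmbedding_prodMk_of_tendsto_atTop (continuous_truncDist u)
    (truncDist_injective hu) (fun x _ hx ha => cauchySeq_tendsto_of_complete
      (cauchySeq_of_tendsto_truncDist hx ha)) hg hgF
  obtain ⟨Φ, hΦ⟩ := exists_homeomorph_prod_pi_nat ℝ
  refine ⟨Φ ∘ _, Φ.isClosedEmbedding.comp hemb, ?_⟩
  rintro - ⟨x, hx, rfl⟩
  obtain ⟨C, hC⟩ := exists_forall_abs_le_of_mem_iUnion (monotone_accumulate (s := K)) hgK
    (by rwa [iUnion_accumulate])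
  refine ⟨max 1 C, fun m => ?_⟩
  rcases hΦ _ m with ⟨k, hk⟩ | ⟨k, hk⟩ <;> rw [Function.comp_apply, ← hk]
  · exact (abs_truncDist_le_one x k).trans (le_max_left _ _)
  · exact (hC k).trans (le_max_right _ _)
end
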